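/- arXiv:1309.6902 — 9 statements merged into one kernel-verified Lean document; each statement's English description precedes it below -/
import Mathlib

section
/- For every integer w ≥ 0, the matrix valued polynomial P_w has degree exactly w, and its leading coefficient (the coefficient of x^w) equals (2^w · ((n+1)/2)_w / ((n+1) · w!)) · Id, a nonsingular scalar matrix, where (a)_w = a(a+1)⋯(a+w−1) denotes the Pochhammer symbol. -/
/-!
The recurrence shows that `C_k^λ` is a real polynomial of degree at most `k` whose `x^k`
coefficient is `2^k (λ)_k / k!`. In `P_w` the terms with `C_{w-1}` and `C_{w-2}` therefore do not
reach degree `w`, so the `x^w` coefficient of `P_w` is `1/(n+1)` times that of `C_w^{(n+1)/2}` on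
the diagonal and `0` off it. It is nonzero because `(n+1)/2 > 0`.
-/

open scoped BigOperators Matrix

noncomputable section

/-- Gegenbauer polynomials `C_k^lam` with natural number index, defined by the
three-term recurrence. -/
def Geg (lam : ℝ) : ℕ → ℝ → ℝ
  | 0 => fun _ => 1
  | 1 => fun x => 2 * lam * x
  | (k + 2) => fun x =>
      (2 * ((k : ℝ) + 2 + lam - 1) * x * Geg lam (k + 1) x
        - ((k : ℝ) + 2 + 2 * lam - 2) * Geg lam k x) / ((k : ℝ) + 2)

/-- Gegenbauer polynomials with integer index, equal to `0` for negative index. -/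
def GegZ (lam : ℝ) (k : ℤ) (x : ℝ) : ℝ :=
  if k < 0 then 0 else Geg lam k.toNat x

/-- The 2×2 matrix valued polynomials `P_w`. -/
def Pw (p n : ℝ) (w : ℕ) (x : ℝ) : Matrix (Fin 2) (Fin 2) ℂ :=
  !![(((1 / (n + 1)) * GegZ ((n + 1) / 2) (w : ℤ) x
        + (1 / (p + w)) * GegZ ((n + 3) / 2) ((w : ℤ) - 2) x : ℝ) : ℂ),
     (((1 / (p + w)) * GegZ ((n + 3) / 2) ((w : ℤ) - 1) x : ℝ) : ℂ);
     (((1 / (n - p + w)) * GegZ ((n + 3) / 2) ((w : ℤ) - 1) x : ℝ) : ℂ),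
     (((1 / (n + 1)) * GegZ ((n + 1) / 2) (w : ℤ) x
        + (1 / (n - p + w)) * GegZ ((n + 3) / 2) ((w : ℤ) - 2) x : ℝ) : ℂ)]

/-- The weight matrix `W_{p,n}` on `(-1,1)`. -/
def Wmat (p n : ℝ) (x : ℝ) : Matrix (Fin 2) (Fin 2) ℂ :=
  (((1 - x ^ 2) ^ (n / 2 - 1) : ℝ) : ℂ) •
    !![((p * x ^ 2 + n - p : ℝ) : ℂ), ((-(n * x) : ℝ) : ℂ);
       ((-(n * x) : ℝ) : ℂ), (((n - p) * x ^ 2 + p : ℝ) : ℂ)]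

/-- Entrywise derivative of a matrix valued function. -/
def mderiv (P : ℝ → Matrix (Fin 2) (Fin 2) ℂ) : ℝ → Matrix (Fin 2) (Fin 2) ℂ :=
  fun x => Matrix.of fun i j => deriv (fun t => P t i j) x

/-- The matrix valued inner product `⟨P,Q⟩ = ∫_{-1}^{1} P(x) W(x) Q(x)^* dx`. -/
def mint (p n : ℝ) (P Q : ℝ → Matrix (Fin 2) (Fin 2) ℂ) : Matrix (Fin 2) (Fin 2) ℂ :=
  Matrix.of fun i j => ∫ x in (-1 : ℝ)..1, (P x * Wmat p n x * (Q x)ᴴ) i j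

/-- A matrix valued function is polynomial if each entry is given by a polynomial. -/
def IsPolyMat (P : ℝ → Matrix (Fin 2) (Fin 2) ℂ) : Prop :=
  ∀ i j, ∃ q : Polynomial ℂ, ∀ x : ℝ, P x i j = q.eval (x : ℂ)

open Polynomial

def gegenbauer (lam : ℝ) : ℕ → ℝ[X]
  | 0 => 1
  | 1 => C (2 * lam) * X
  | (k + 2) => ((k : ℝ) + 2)⁻¹ •
      (C (2 * ((k : ℝ) + 1 + lam)) * X * gegenbauer lam (k + 1)
        - C ((k : ℝ) + 2 * lam) * gegenbauer lam k)

theorem eval_gegenbauer (lam x : ℝ) : ∀ k, (gegenbauer lam k).eval x = Geg lam k x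
  | 0 => by simp [gegenbauer, Geg]
  | 1 => by simp [gegenbauer, Geg]
  | (k + 2) => by
    simp only [gegenbauer, Geg, eval_smul, eval_sub, eval_mul, eval_C, eval_X,
      eval_gegenbauer lam x k, eval_gegenbauer lam x (k + 1), smul_eq_mul]
    ring

theorem natDegree_gegenbauer_le (lam : ℝ) : ∀ k, (gegenbauer lam k).natDegree ≤ k
  | 0 => by simp [gegenbauer]
  | 1 => (natDegree_C_mul_le _ _).trans natDegree_X_le
  | (k + 2) => by
    have hX :
        (C (2 * ((k : ℝ) + 1 + lam)) * X * gegenbauer lam (k + 1)).natDegree ≤ 1 + (k + 1) :=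
      natDegree_mul_le_of_le ((natDegree_C_mul_le _ _).trans natDegree_X_le)
        (natDegree_gegenbauer_le lam (k + 1))
    have hC : (C ((k : ℝ) + 2 * lam) * gegenbauer lam k).natDegree ≤ k :=
      (natDegree_C_mul_le _ _).trans (natDegree_gegenbauer_le lam k)
    exact (natDegree_smul_le _ _).trans ((natDegree_sub_le_of_le hX hC).trans (by omega))

theorem coeff_gegenbauer_self (lam : ℝ) : ∀ k,
    (gegenbauer lam k).coeff k = 2 ^ k * (ascPochhammer ℝ k).eval lam / k.factorial
  | 0 => by simp [gegenbauer]
  | 1 => by simp [gegenbauer]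
  | (k + 2) => by
    have hlow : (gegenbauer lam k).coeff (k + 2) = 0 :=
      coeff_eq_zero_of_natDegree_lt ((natDegree_gegenbauer_le lam k).trans_lt (by omega))
    simp only [gegenbauer, coeff_smul, coeff_sub, coeff_C_mul, mul_assoc, coeff_X_mul, hlow,
      coeff_gegenbauer_self lam (k + 1), ascPochhammer_succ_eval (k + 1), Nat.factorial_succ,
      smul_eq_mul]
    push_cast
    field_simp
    ring

def gegenbauerZ (lam : ℝ) (k : ℤ) : ℝ[X] :=
  if k < 0 then 0 else gegenbauer lam k.toNat

theorem eval_gegenbauerZ (lam : ℝ) (k : ℤ) (x : ℝ) :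
    (gegenbauerZ lam k).eval x = GegZ lam k x := by
  unfold gegenbauerZ GegZ
  split_ifs <;> simp [eval_gegenbauer]

@[simp]
theorem gegenbauerZ_natCast (lam : ℝ) (k : ℕ) : gegenbauerZ lam k = gegenbauer lam k := by
  simp [gegenbauerZ]

theorem natDegree_gegenbauerZ_le (lam : ℝ) {k : ℤ} {m : ℕ} (h : k ≤ m) :
    (gegenbauerZ lam k).natDegree ≤ m := by
  unfold gegenbauerZ
  split_ifs
  · simp
  · exact (natDegree_gegenbauer_le lam _).trans (by omega)

theorem coeff_gegenbauerZ_of_lt (lam : ℝ) {k : ℤ} {m : ℕ} (h : k < m) :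
    (gegenbauerZ lam k).coeff m = 0 := by
  unfold gegenbauerZ
  split_ifs
  · simp
  · exact coeff_eq_zero_of_natDegree_lt ((natDegree_gegenbauer_le lam _).trans_lt (by omega))

theorem Matrix.map_aeval_eq_sum_range {m n R A : Type*} [CommSemiring R] [Semiring A]
    [Algebra R A] (Q : Matrix m n R[X]) {d : ℕ} (hQ : ∀ i j, (Q i j).natDegree < d) (x : A) :
    Q.map (aeval x) =
      ∑ k ∈ Finset.range d, x ^ k • Q.map (fun q => algebraMap R A (q.coeff k)) := by
  ext i j
  simp [Matrix.sum_apply, aeval_eq_sum_range' (hQ i j), Algebra.smul_def, Algebra.commutes]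

def pwPoly (p n : ℝ) (w : ℕ) : Matrix (Fin 2) (Fin 2) ℝ[X] :=
  !![(1 / (n + 1)) • gegenbauerZ ((n + 1) / 2) w
        + (1 / (p + w)) • gegenbauerZ ((n + 3) / 2) (w - 2),
     (1 / (p + w)) • gegenbauerZ ((n + 3) / 2) (w - 1);
     (1 / (n - p + w)) • gegenbauerZ ((n + 3) / 2) (w - 1),
     (1 / (n + 1)) • gegenbauerZ ((n + 1) / 2) w
        + (1 / (n - p + w)) • gegenbauerZ ((n + 3) / 2) (w - 2)]

theorem Pw_eq_map_aeval (p n : ℝ) (w : ℕ) (x : ℝ) :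
    Pw p n w x = (pwPoly p n w).map (aeval (x : ℂ)) := by
  have haeval (q : ℝ[X]) : aeval (x : ℂ) q = ((q.eval x : ℝ) : ℂ) :=
    aeval_algebraMap_apply_eq_algebraMap_eval x q
  ext i j
  fin_cases i <;> fin_cases j <;>
    simp [Pw, pwPoly, haeval, ← eval_gegenbauerZ]

theorem natDegree_pwPoly_le (p n : ℝ) (w : ℕ) (i j : Fin 2) :
    (pwPoly p n w i j).natDegree ≤ w := by
  have hdiag (a b : ℝ) : (a • gegenbauerZ ((n + 1) / 2) w
      + b • gegenbauerZ ((n + 3) / 2) (w - 2)).natDegree ≤ w :=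
    natDegree_add_le_of_degree_le
      ((natDegree_smul_le _ _).trans (natDegree_gegenbauerZ_le _ le_rfl))
      ((natDegree_smul_le _ _).trans (natDegree_gegenbauerZ_le _ (by omega)))
  have hoff (a : ℝ) : (a • gegenbauerZ ((n + 3) / 2) (w - 1)).natDegree ≤ w :=
    (natDegree_smul_le _ _).trans (natDegree_gegenbauerZ_le _ (by omega))
  fin_cases i <;> fin_cases j
  · exact hdiag _ _
  · exact hoff _
  · exact hoff _
  · exact hdiag _ _

theorem map_coeff_pwPoly_self (p n : ℝ) (w : ℕ) :
    (pwPoly p n w).map (coeff · w) = ((2 ^ w * (ascPochhammer ℝ w).eval ((n + 1) / 2)) /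
          ((n + 1) * (Nat.factorial w)) : ℝ) • (1 : Matrix (Fin 2) (Fin 2) ℝ) := by
  have h1 := coeff_gegenbauerZ_of_lt ((n + 3) / 2) (show (w : ℤ) - 1 < w by omega)
  have h2 := coeff_gegenbauerZ_of_lt ((n + 3) / 2) (show (w : ℤ) - 2 < w by omega)
  ext i j
  fin_cases i <;> fin_cases j <;>
    simp [pwPoly, h1, h2, coeff_gegenbauer_self, inv_mul_eq_div, div_div, mul_comm]

/-- `P_w` has degree exactly `w`, with leading coefficient
`(2^w ((n+1)/2)_w / ((n+1) w!)) · Id`, a nonsingular scalar matrix. -/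
theorem statement0 (p n : ℝ) (hp : 0 < p) (hpn : p < n) (w : ℕ) :
    ∃ c : ℕ → Matrix (Fin 2) (Fin 2) ℂ,
      (∀ x : ℝ, Pw p n w x = ∑ j ∈ Finset.range (w + 1), (x : ℂ) ^ j • c j) ∧
      c w = (((2 ^ w * (ascPochhammer ℝ w).eval ((n + 1) / 2)) /
          ((n + 1) * (Nat.factorial w)) : ℝ) : ℂ) • (1 : Matrix (Fin 2) (Fin 2) ℂ) ∧
      ((2 ^ w * (ascPochhammer ℝ w).eval ((n + 1) / 2)) /
          ((n + 1) * (Nat.factorial w)) : ℝ) ≠ 0 := by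
  refine ⟨fun j => ((pwPoly p n w).map (coeff · j)).map (↑), fun x => ?_, ?_, ?_⟩ <;>
    beta_reduce
  · rw [Pw_eq_map_aeval]
    exact Matrix.map_aeval_eq_sum_range _ (fun i j => Nat.lt_succ_of_le (natDegree_pwPoly_le ..)) _
  · rw [map_coeff_pwPoly_self p n w]
    ext i j
    by_cases h : i = j <;> simp [h]
  · have hpoch : 0 < (ascPochhammer ℝ w).eval ((n + 1) / 2) :=
      ascPochhammer_pos w _ (by linarith)
    have hn : 0 < n + 1 := by linarith
    positivity

end
end

section
/- For every integer w ≥ 0 and every real x, (1−x²)·P_w''(x) − P_w'(x)·((n+2)·x·Id + 2·[[0,1],[1,0]]) − P_w(x)·[[p,0],[0,n−p]] = Λ_w·P_w(x), where Λ_w = [[−w(w+n+1)−p, 0],[0, −w(w+n+1)−(n−p)]]. -/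
open scoped BigOperators Matrix

noncomputable section

lemma GegZ_natCast (lam : ℝ) (m : ℕ) (x : ℝ) : GegZ lam (m : ℤ) x = Geg lam m x := by
  simp [GegZ]

lemma GegZ_neg (lam : ℝ) {k : ℤ} (hk : k < 0) (x : ℝ) : GegZ lam k x = 0 := by
  simp [GegZ, hk]

lemma geg_rec (lam : ℝ) (m : ℕ) (x : ℝ) :
    ((m : ℝ) + 2) * Geg lam (m + 2) x
      = 2 * ((m : ℝ) + 1 + lam) * x * Geg lam (m + 1) x
        - ((m : ℝ) + 2 * lam) * Geg lam m x := by
  have h : ((m : ℝ) + 2) ≠ 0 := by positivity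
  simp only [Geg]
  field_simp
  ring

lemma gegZ_recZ (lam : ℝ) (k : ℤ) (x : ℝ) :
    ((k : ℝ) + 2) * GegZ lam (k + 2) x
      = 2 * ((k : ℝ) + 1 + lam) * x * GegZ lam (k + 1) x
        - ((k : ℝ) + 2 * lam) * GegZ lam k x := by
  rcases lt_trichotomy k (-2) with h | h | h
  · rw [GegZ_neg lam (by omega) x, GegZ_neg lam (by omega) x, GegZ_neg lam (by omega) x]
    ring
  · subst h
    norm_num [GegZ, Geg]
  · rcases eq_or_lt_of_le (by omega : (-1 : ℤ) ≤ k) with h1 | h1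
    · subst h1
      norm_num [GegZ, Geg]
    · lift k to ℕ using (by omega) with m
      have e2 : (m : ℤ) + 2 = ((m + 2 : ℕ) : ℤ) := by push_cast; ring
      have e1 : (m : ℤ) + 1 = ((m + 1 : ℕ) : ℤ) := by push_cast; ring
      rw [e2, e1, GegZ_natCast, GegZ_natCast, GegZ_natCast]
      exact_mod_cast geg_rec lam m x


lemma A13 (lam : ℝ) (m : ℕ) (x : ℝ) :
    ((m : ℝ) + 2 * lam) * GegZ lam (m : ℤ) x
        = 2 * lam * (GegZ (lam + 1) (m : ℤ) x - x * GegZ (lam + 1) ((m : ℤ) - 1) x)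
    ∧ ((m : ℝ) + lam) * GegZ lam (m : ℤ) x
        = lam * (GegZ (lam + 1) (m : ℤ) x - GegZ (lam + 1) ((m : ℤ) - 2) x) := by
  induction m using Nat.twoStepInduction with
  | zero =>
    constructor <;> norm_num [GegZ, Geg]
  | one =>
    have g1 : GegZ lam ((1 : ℕ) : ℤ) x = 2 * lam * x := by norm_num [GegZ, Geg]
    have g1' : GegZ (lam + 1) ((1 : ℕ) : ℤ) x = 2 * (lam + 1) * x := by norm_num [GegZ, Geg]
    have g0' : GegZ (lam + 1) (((1 : ℕ) : ℤ) - 1) x = 1 := by norm_num [GegZ, Geg]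
    have gm' : GegZ (lam + 1) (((1 : ℕ) : ℤ) - 2) x = 0 := by
      rw [GegZ_neg (lam + 1) (by norm_num) x]
    rw [g1, g1', g0', gm']
    constructor <;> push_cast <;> ring
  | more m ih0 ih1 =>
    obtain ⟨h1a, h3a⟩ := ih0
    obtain ⟨h1b, h3b⟩ := ih1
    have e1 : ((m : ℤ) + 1) - 1 = (m : ℤ) := by ring
    have e2 : ((m : ℤ) + 1) - 2 = (m : ℤ) - 1 := by ring
    have e3 : ((m : ℤ) + 2) - 1 = (m : ℤ) + 1 := by ring
    have e4 : ((m : ℤ) + 2) - 2 = (m : ℤ) := by ring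
    push_cast at h1b h3b ⊢
    rw [e1] at h1b
    rw [e2] at h3b
    rw [e3, e4]
    have rc := gegZ_recZ lam (m : ℤ) x
    have rg := gegZ_recZ (lam + 1) (m : ℤ) x
    push_cast at rc rg
    have hM : ((m : ℝ) + 2) ≠ 0 := by positivity
    constructor
    · apply mul_left_cancel₀ hM
      linear_combination ((m : ℝ) + 2 * lam + 2) * rc - 2 * lam * rg
        - ((m : ℝ) + 2 * lam + 2) * h1a + 2 * x * ((m : ℝ) + 2 * lam + 2) * h3b
    · apply mul_left_cancel₀ hM
      linear_combination ((m : ℝ) + lam + 2) * rc - lam * rg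
        - ((m : ℝ) + lam + 2) * h1a + 2 * x * ((m : ℝ) + lam + 2) * h3b


lemma A1Z (lam : ℝ) (k : ℤ) (x : ℝ) :
    ((k : ℝ) + 2 * lam) * GegZ lam k x
      = 2 * lam * (GegZ (lam + 1) k x - x * GegZ (lam + 1) (k - 1) x) := by
  rcases lt_or_ge k 0 with h | h
  · rw [GegZ_neg lam h x, GegZ_neg (lam + 1) h x, GegZ_neg (lam + 1) (by omega) x]
    ring
  · lift k to ℕ using h with m
    exact_mod_cast (A13 lam m x).1

lemma A3Z (lam : ℝ) (k : ℤ) (x : ℝ) :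
    ((k : ℝ) + lam) * GegZ lam k x
      = lam * (GegZ (lam + 1) k x - GegZ (lam + 1) (k - 2) x) := by
  rcases lt_or_ge k 0 with h | h
  · rw [GegZ_neg lam h x, GegZ_neg (lam + 1) h x, GegZ_neg (lam + 1) (by omega) x]
    ring
  · lift k to ℕ using h with m
    exact_mod_cast (A13 lam m x).2

lemma A2Z (lam : ℝ) (k : ℤ) (x : ℝ) :
    (k : ℝ) * GegZ lam k x
      = 2 * lam * (x * GegZ (lam + 1) (k - 1) x - GegZ (lam + 1) (k - 2) x) := by
  linear_combination 2 * A3Z lam k x - A1Z lam k x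

lemma A4Z (lam : ℝ) (k : ℤ) (x : ℝ) :
    ((k : ℝ) + 2 * lam) * GegZ lam k x - ((k : ℝ) + 1) * x * GegZ lam (k + 1) x
      = 2 * lam * (1 - x ^ 2) * GegZ (lam + 1) k x := by
  have h2 := A2Z lam (k + 1) x
  rw [show k + 1 - 1 = k from by ring, show k + 1 - 2 = k - 1 from by ring] at h2
  push_cast at h2
  linear_combination A1Z lam k x - x * h2

lemma odeZ (lam : ℝ) (k : ℤ) (x : ℝ) :
    (1 - x ^ 2) * (2 * lam * (2 * (lam + 1) * GegZ (lam + 2) (k - 2) x))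
      - (2 * lam + 1) * x * (2 * lam * GegZ (lam + 1) (k - 1) x)
      + (k : ℝ) * ((k : ℝ) + 2 * lam) * GegZ lam k x = 0 := by
  have h4 := A4Z (lam + 1) (k - 2) x
  rw [show lam + 1 + 1 = lam + 2 from by ring, show k - 2 + 1 = k - 1 from by ring] at h4
  push_cast at h4
  have h2 := A2Z lam k x
  linear_combination -2 * lam * h4 + ((k : ℝ) + 2 * lam) * h2


lemma hasDerivAt_Geg (lam : ℝ) (m : ℕ) (x : ℝ) :
    HasDerivAt (Geg lam m) (2 * lam * GegZ (lam + 1) ((m : ℤ) - 1) x) x := by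
  induction m using Nat.twoStepInduction with
  | zero =>
    rw [GegZ_neg (lam + 1) (by norm_num) x]
    simpa [Geg] using hasDerivAt_const x (1 : ℝ)
  | one =>
    have g0 : GegZ (lam + 1) (((1 : ℕ) : ℤ) - 1) x = 1 := by norm_num [GegZ, Geg]
    rw [g0]
    simpa [Geg] using (hasDerivAt_id x).const_mul (2 * lam)
  | more m ih0 ih1 =>
    have e1 : ((m + 1 : ℕ) : ℤ) - 1 = (m : ℤ) := by push_cast; ring
    have e0 : ((m : ℕ) : ℤ) - 1 = (m : ℤ) - 1 := rfl
    rw [e1] at ih1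
    have hfun : Geg lam (m + 2) = fun y =>
        (2 * ((m : ℝ) + 2 + lam - 1) * (y * Geg lam (m + 1) y)
          - ((m : ℝ) + 2 + 2 * lam - 2) * Geg lam m y) / ((m : ℝ) + 2) := by
      funext y
      simp only [Geg]
      ring
    rw [hfun]
    have h := ((((hasDerivAt_id x).mul ih1).const_mul
        (2 * ((m : ℝ) + 2 + lam - 1))).sub
          (ih0.const_mul ((m : ℝ) + 2 + 2 * lam - 2))).div_const ((m : ℝ) + 2)
    have hval : (2 * ((m : ℝ) + 2 + lam - 1) *
          (1 * Geg lam (m + 1) x + x * (2 * lam * GegZ (lam + 1) (m : ℤ) x))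
        - ((m : ℝ) + 2 + 2 * lam - 2) * (2 * lam * GegZ (lam + 1) ((m : ℤ) - 1) x))
          / ((m : ℝ) + 2)
        = 2 * lam * GegZ (lam + 1) (((m + 2 : ℕ) : ℤ) - 1) x := by
      have e2 : ((m + 2 : ℕ) : ℤ) - 1 = (m : ℤ) + 1 := by push_cast; ring
      rw [e2]
      have hM : ((m : ℝ) + 2) ≠ 0 := by positivity
      rw [div_eq_iff hM]
      have ecast : Geg lam (m + 1) x = GegZ lam ((m : ℤ) + 1) x := by
        rw [show (m : ℤ) + 1 = ((m + 1 : ℕ) : ℤ) from by push_cast; ring, GegZ_natCast]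
      rw [ecast]
      have a3 := A3Z lam ((m : ℤ) + 1) x
      rw [show (m : ℤ) + 1 - 2 = (m : ℤ) - 1 from by ring] at a3
      have grec := gegZ_recZ (lam + 1) ((m : ℤ) - 1) x
      rw [show (m : ℤ) - 1 + 2 = (m : ℤ) + 1 from by ring,
        show (m : ℤ) - 1 + 1 = (m : ℤ) from by ring] at grec
      push_cast at a3 grec
      linear_combination 2 * a3 - 2 * lam * grec
    rw [← hval]
    exact h

lemma hasDerivAt_GegZ (lam : ℝ) (k : ℤ) (x : ℝ) :
    HasDerivAt (fun t => GegZ lam k t) (2 * lam * GegZ (lam + 1) (k - 1) x) x := by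
  rcases lt_or_ge k 0 with h | h
  · have hf : (fun t => GegZ lam k t) = fun _ => (0 : ℝ) := funext fun t => GegZ_neg lam h t
    rw [hf, GegZ_neg (lam + 1) (by omega) x]
    simpa using hasDerivAt_const x (0 : ℝ)
  · lift k to ℕ using h with m
    have hf : (fun t => GegZ lam (m : ℤ) t) = Geg lam m := funext fun t => GegZ_natCast lam m t
    rw [hf]
    exact hasDerivAt_Geg lam m x



def Pd (p n : ℝ) (w : ℕ) (x : ℝ) : Matrix (Fin 2) (Fin 2) ℂ :=
  !![(((1 / (n + 1)) * ((n + 1) * GegZ ((n + 3) / 2) ((w : ℤ) - 1) x)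
        + (1 / (p + w)) * ((n + 3) * GegZ ((n + 5) / 2) ((w : ℤ) - 3) x) : ℝ) : ℂ),
     (((1 / (p + w)) * ((n + 3) * GegZ ((n + 5) / 2) ((w : ℤ) - 2) x) : ℝ) : ℂ);
     (((1 / (n - p + w)) * ((n + 3) * GegZ ((n + 5) / 2) ((w : ℤ) - 2) x) : ℝ) : ℂ),
     (((1 / (n + 1)) * ((n + 1) * GegZ ((n + 3) / 2) ((w : ℤ) - 1) x)
        + (1 / (n - p + w)) * ((n + 3) * GegZ ((n + 5) / 2) ((w : ℤ) - 3) x) : ℝ) : ℂ)]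

def Pdd (p n : ℝ) (w : ℕ) (x : ℝ) : Matrix (Fin 2) (Fin 2) ℂ :=
  !![(((1 / (n + 1)) * ((n + 1) * ((n + 3) * GegZ ((n + 5) / 2) ((w : ℤ) - 2) x))
        + (1 / (p + w)) * ((n + 3) * ((n + 5) * GegZ ((n + 7) / 2) ((w : ℤ) - 4) x)) : ℝ) : ℂ),
     (((1 / (p + w)) * ((n + 3) * ((n + 5) * GegZ ((n + 7) / 2) ((w : ℤ) - 3) x)) : ℝ) : ℂ);
     (((1 / (n - p + w)) * ((n + 3) * ((n + 5) * GegZ ((n + 7) / 2) ((w : ℤ) - 3) x)) : ℝ) : ℂ),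
     (((1 / (n + 1)) * ((n + 1) * ((n + 3) * GegZ ((n + 5) / 2) ((w : ℤ) - 2) x))
        + (1 / (n - p + w)) * ((n + 3) * ((n + 5) * GegZ ((n + 7) / 2) ((w : ℤ) - 4) x)) : ℝ) : ℂ)]

lemma mderiv_Pw (p n : ℝ) (w : ℕ) : mderiv (Pw p n w) = Pd p n w := by
  funext x
  ext i j
  fin_cases i <;> fin_cases j <;>
    simp only [mderiv, Matrix.of_apply, Pw, Pd, Fin.zero_eta, Fin.mk_one,
      Matrix.cons_val', Matrix.cons_val_zero, Matrix.cons_val_one, Matrix.head_cons,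
      Matrix.empty_val', Matrix.cons_val_fin_one, Matrix.head_fin_const]
  · exact ((((hasDerivAt_GegZ ((n + 1) / 2) (w : ℤ) x).const_mul (1 / (n + 1))).add
      ((hasDerivAt_GegZ ((n + 3) / 2) ((w : ℤ) - 2) x).const_mul (1 / (p + w)))).ofReal_comp).deriv.trans
      (by rw [Complex.ofReal_inj]
          rw [show (n + 1) / 2 + 1 = (n + 3) / 2 from by ring,
            show (n + 3) / 2 + 1 = (n + 5) / 2 from by ring,
            show (w : ℤ) - 2 - 1 = (w : ℤ) - 3 from by ring]
          ring)
  · exact (((hasDerivAt_GegZ ((n + 3) / 2) ((w : ℤ) - 1) x).const_mul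
      (1 / (p + w))).ofReal_comp).deriv.trans
      (by rw [Complex.ofReal_inj]
          rw [show (n + 3) / 2 + 1 = (n + 5) / 2 from by ring,
            show (w : ℤ) - 1 - 1 = (w : ℤ) - 2 from by ring]
          ring)
  · exact (((hasDerivAt_GegZ ((n + 3) / 2) ((w : ℤ) - 1) x).const_mul
      (1 / (n - p + w))).ofReal_comp).deriv.trans
      (by rw [Complex.ofReal_inj]
          rw [show (n + 3) / 2 + 1 = (n + 5) / 2 from by ring,
            show (w : ℤ) - 1 - 1 = (w : ℤ) - 2 from by ring]
          ring)
  · exact ((((hasDerivAt_GegZ ((n + 1) / 2) (w : ℤ) x).const_mul (1 / (n + 1))).add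
      ((hasDerivAt_GegZ ((n + 3) / 2) ((w : ℤ) - 2) x).const_mul (1 / (n - p + w)))).ofReal_comp).deriv.trans
      (by rw [Complex.ofReal_inj]
          rw [show (n + 1) / 2 + 1 = (n + 3) / 2 from by ring,
            show (n + 3) / 2 + 1 = (n + 5) / 2 from by ring,
            show (w : ℤ) - 2 - 1 = (w : ℤ) - 3 from by ring]
          ring)


lemma mderiv_Pd (p n : ℝ) (w : ℕ) : mderiv (Pd p n w) = Pdd p n w := by
  funext x
  ext i j
  fin_cases i <;> fin_cases j <;>
    simp only [mderiv, Matrix.of_apply, Pd, Pdd, Fin.zero_eta, Fin.mk_one,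
      Matrix.cons_val', Matrix.cons_val_zero, Matrix.cons_val_one, Matrix.head_cons,
      Matrix.empty_val', Matrix.cons_val_fin_one, Matrix.head_fin_const]
  · exact (((((hasDerivAt_GegZ ((n + 3) / 2) ((w : ℤ) - 1) x).const_mul (n + 1)).const_mul
        (1 / (n + 1))).add
      (((hasDerivAt_GegZ ((n + 5) / 2) ((w : ℤ) - 3) x).const_mul (n + 3)).const_mul
        (1 / (p + w)))).ofReal_comp).deriv.trans
      (by rw [Complex.ofReal_inj]
          rw [show (n + 3) / 2 + 1 = (n + 5) / 2 from by ring,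
            show (n + 5) / 2 + 1 = (n + 7) / 2 from by ring,
            show (w : ℤ) - 1 - 1 = (w : ℤ) - 2 from by ring,
            show (w : ℤ) - 3 - 1 = (w : ℤ) - 4 from by ring]
          ring)
  · exact ((((hasDerivAt_GegZ ((n + 5) / 2) ((w : ℤ) - 2) x).const_mul (n + 3)).const_mul
      (1 / (p + w))).ofReal_comp).deriv.trans
      (by rw [Complex.ofReal_inj]
          rw [show (n + 5) / 2 + 1 = (n + 7) / 2 from by ring,
            show (w : ℤ) - 2 - 1 = (w : ℤ) - 3 from by ring]
          ring)
  · exact ((((hasDerivAt_GegZ ((n + 5) / 2) ((w : ℤ) - 2) x).const_mul (n + 3)).const_mul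
      (1 / (n - p + w))).ofReal_comp).deriv.trans
      (by rw [Complex.ofReal_inj]
          rw [show (n + 5) / 2 + 1 = (n + 7) / 2 from by ring,
            show (w : ℤ) - 2 - 1 = (w : ℤ) - 3 from by ring]
          ring)
  · exact (((((hasDerivAt_GegZ ((n + 3) / 2) ((w : ℤ) - 1) x).const_mul (n + 1)).const_mul
        (1 / (n + 1))).add
      (((hasDerivAt_GegZ ((n + 5) / 2) ((w : ℤ) - 3) x).const_mul (n + 3)).const_mul
        (1 / (n - p + w)))).ofReal_comp).deriv.trans
      (by rw [Complex.ofReal_inj]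
          rw [show (n + 3) / 2 + 1 = (n + 5) / 2 from by ring,
            show (n + 5) / 2 + 1 = (n + 7) / 2 from by ring,
            show (w : ℤ) - 1 - 1 = (w : ℤ) - 2 from by ring,
            show (w : ℤ) - 3 - 1 = (w : ℤ) - 4 from by ring]
          ring)


/-- `P_w` is an eigenfunction of the differential operator `D`,
with eigenvalue `Λ_w = diag(-w(w+n+1)-p, -w(w+n+1)-(n-p))`. -/
theorem statement1 (p n : ℝ) (hp : 0 < p) (hpn : p < n) (w : ℕ) (x : ℝ) :
    ((1 - x ^ 2 : ℝ) : ℂ) • mderiv (mderiv (Pw p n w)) x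
      - mderiv (Pw p n w) x *
          ((((n + 2) * x : ℝ) : ℂ) • (1 : Matrix (Fin 2) (Fin 2) ℂ)
            + (2 : ℂ) • !![(0 : ℂ), 1; 1, 0])
      - Pw p n w x * !![(p : ℂ), 0; 0, ((n - p : ℝ) : ℂ)]
    = !![((-((w : ℝ) * ((w : ℝ) + n + 1)) - p : ℝ) : ℂ), 0;
         0, ((-((w : ℝ) * ((w : ℝ) + n + 1)) - (n - p) : ℝ) : ℂ)] * Pw p n w x := by
  rw [mderiv_Pw, mderiv_Pd]
  have hn1 : n + 1 ≠ 0 := by linarith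
  have hpw : p + (w : ℝ) ≠ 0 := by positivity
  have hnpw : n - p + (w : ℝ) ≠ 0 := by
    have : (0:ℝ) ≤ (w:ℝ) := Nat.cast_nonneg w
    linarith
  have ha : (1 / (n + 1)) * (n + 1) = 1 := by field_simp
  have hal : (1 / (p + (w:ℝ))) * (p + (w:ℝ)) = 1 := by field_simp
  have hbe : (1 / (n - p + (w:ℝ))) * (n - p + (w:ℝ)) = 1 := by field_simp
  have o1 := odeZ ((n + 1) / 2) (w : ℤ) x
  rw [show (n + 1) / 2 + 1 = (n + 3) / 2 from by ring,
    show (n + 1) / 2 + 2 = (n + 5) / 2 from by ring] at o1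
  have o2 := odeZ ((n + 3) / 2) ((w : ℤ) - 2) x
  rw [show (n + 3) / 2 + 1 = (n + 5) / 2 from by ring,
    show (n + 3) / 2 + 2 = (n + 7) / 2 from by ring,
    show (w : ℤ) - 2 - 2 = (w : ℤ) - 4 from by ring,
    show (w : ℤ) - 2 - 1 = (w : ℤ) - 3 from by ring] at o2
  have o3 := odeZ ((n + 3) / 2) ((w : ℤ) - 1) x
  rw [show (n + 3) / 2 + 1 = (n + 5) / 2 from by ring,
    show (n + 3) / 2 + 2 = (n + 7) / 2 from by ring,
    show (w : ℤ) - 1 - 2 = (w : ℤ) - 3 from by ring,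
    show (w : ℤ) - 1 - 1 = (w : ℤ) - 2 from by ring] at o3
  have a1 := A1Z ((n + 3) / 2) ((w : ℤ) - 2) x
  rw [show (n + 3) / 2 + 1 = (n + 5) / 2 from by ring,
    show (w : ℤ) - 2 - 1 = (w : ℤ) - 3 from by ring] at a1
  have a2 := A2Z ((n + 3) / 2) ((w : ℤ) - 1) x
  rw [show (n + 3) / 2 + 1 = (n + 5) / 2 from by ring,
    show (w : ℤ) - 1 - 1 = (w : ℤ) - 2 from by ring,
    show (w : ℤ) - 1 - 2 = (w : ℤ) - 3 from by ring] at a2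
  push_cast at o1 o2 o3 a1 a2
  have o1' := congrArg Complex.ofReal o1
  have o2' := congrArg Complex.ofReal o2
  have o3' := congrArg Complex.ofReal o3
  have a1' := congrArg Complex.ofReal a1
  have a2' := congrArg Complex.ofReal a2
  have ha' := congrArg Complex.ofReal ha
  have hal' := congrArg Complex.ofReal hal
  have hbe' := congrArg Complex.ofReal hbe
  push_cast at o1' o2' o3' a1' a2' ha' hal' hbe'
  have hop : (((n + 2) * x : ℝ) : ℂ) • (1 : Matrix (Fin 2) (Fin 2) ℂ)
      + (2 : ℂ) • !![(0 : ℂ), 1; 1, 0]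
      = !![(((n + 2) * x : ℝ) : ℂ), 2; 2, (((n + 2) * x : ℝ) : ℂ)] := by
    ext i j
    fin_cases i <;> fin_cases j <;>
      simp [Matrix.one_apply]
  rw [hop]
  ext i j
  fin_cases i <;> fin_cases j <;>
    simp [Pw, Pd, Pdd, Matrix.mul_apply, Fin.sum_univ_two]
  · linear_combination ((n:ℂ)+1)⁻¹ * o1' + ((p:ℂ)+(w:ℂ))⁻¹ * o2'
      + 2*((p:ℂ)+(w:ℂ))⁻¹ * a1'
  · linear_combination ((p:ℂ)+(w:ℂ))⁻¹ * o3' - 2*((p:ℂ)+(w:ℂ))⁻¹ * a2'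
      - 2*((GegZ ((n+3)/2) ((w:ℤ)-1) x : ℝ) : ℂ)*ha'
      + 2*((GegZ ((n+3)/2) ((w:ℤ)-1) x : ℝ) : ℂ)*hal'
  · linear_combination ((n:ℂ)-(p:ℂ)+(w:ℂ))⁻¹ * o3' - 2*((n:ℂ)-(p:ℂ)+(w:ℂ))⁻¹ * a2'
      - 2*((GegZ ((n+3)/2) ((w:ℤ)-1) x : ℝ) : ℂ)*ha'
      + 2*((GegZ ((n+3)/2) ((w:ℤ)-1) x : ℝ) : ℂ)*hbe'
  · linear_combination ((n:ℂ)+1)⁻¹ * o1' + ((n:ℂ)-(p:ℂ)+(w:ℂ))⁻¹ * o2'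
      + 2*((n:ℂ)-(p:ℂ)+(w:ℂ))⁻¹ * a1'


end
end

section
/- If n ≠ 2p, then there is no invertible 2×2 complex matrix M such that M·W(x)·M* is a diagonal matrix for every x ∈ (−1,1); that is, the weight W does not reduce to weights of smaller size. -/
open scoped BigOperators Matrix

noncomputable section

/-- if `n ≠ 2p`, the weight `W` does not reduce to smaller size:
no invertible matrix `M` makes `M W(x) M^*` diagonal for all `x ∈ (-1,1)`. -/
theorem statement2 (p n : ℝ) (hp : 0 < p) (hpn : p < n) (hn : n ≠ 2 * p) :
    ¬ ∃ M : Matrix (Fin 2) (Fin 2) ℂ, IsUnit M ∧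
        ∀ x ∈ Set.Ioo (-1 : ℝ) 1, (M * Wmat p n x * Mᴴ).IsDiag := by
  rintro ⟨M, hM, hdiag⟩
  have hdet : M 0 0 * M 1 1 - M 0 1 * M 1 0 ≠ 0 := by
    have := (Matrix.isUnit_iff_isUnit_det M).mp hM
    rw [Matrix.det_fin_two] at this
    exact this.ne_zero
  set a := M 0 0 with ha
  set b := M 0 1 with hb
  set c := M 1 0 with hc
  set d := M 1 1 with hd1
  have key : ∀ x ∈ Set.Ioo (-1 : ℝ) 1,
      ((p * x ^ 2 + n - p : ℝ) : ℂ) * (a * (starRingEnd ℂ) c)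
        + ((-(n * x) : ℝ) : ℂ) * (a * (starRingEnd ℂ) d + b * (starRingEnd ℂ) c)
        + (((n - p) * x ^ 2 + p : ℝ) : ℂ) * (b * (starRingEnd ℂ) d) = 0 := by
    intro x hx
    have h := hdiag x hx (show (0 : Fin 2) ≠ 1 by decide)
    have hf : (((1 - x ^ 2) ^ (n / 2 - 1) : ℝ) : ℂ) ≠ 0 := by
      have h1 : (0 : ℝ) < 1 - x ^ 2 := by nlinarith [hx.1, hx.2]
      exact_mod_cast (Real.rpow_pos_of_pos h1 _).ne'
    simp only [Wmat, Matrix.mul_apply, Fin.sum_univ_two, Matrix.smul_apply,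
      Matrix.conjTranspose_apply, Matrix.cons_val', Matrix.cons_val_zero,
      Matrix.cons_val_one, Matrix.head_cons, Matrix.head_fin_const,
      Matrix.empty_val', Matrix.cons_val_fin_one, Matrix.of_apply,
      smul_eq_mul] at h
    rw [ha, hb, hc, hd1]
    simp only [← starRingEnd_apply] at h
    refine (mul_eq_zero.mp ?_).resolve_left hf
    linear_combination h
  have h0 := key 0 (by norm_num)
  have h1 := key (1/2) (by norm_num)
  have h2 := key (-(1/2)) (by norm_num)
  push_cast at h0 h1 h2
  set A := a * (starRingEnd ℂ) c with hA
  set B := b * (starRingEnd ℂ) d with hB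
  set C := a * (starRingEnd ℂ) d + b * (starRingEnd ℂ) c with hC
  have hnR : (0 : ℝ) < n := lt_trans hp hpn
  have hN : (n : ℂ) ≠ 0 := by exact_mod_cast hnR.ne'
  have hNP : (n : ℂ) - p ≠ 0 := by
    have : (n : ℝ) - p ≠ 0 := by linarith
    exact_mod_cast this
  have hN2P : (n : ℂ) - 2 * p ≠ 0 := by
    have : (n : ℝ) - 2 * p ≠ 0 := fun h => hn (by linarith)
    exact_mod_cast this
  have hCz : C = 0 := by
    have : (n : ℂ) * C = 0 := by linear_combination h2 - h1
    exact (mul_eq_zero.mp this).resolve_left hN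
  have hAB2 : (p : ℂ) * A + ((n : ℂ) - p) * B = 0 := by
    linear_combination 2 * h1 + 2 * h2 - 4 * h0
  have hAz : A = 0 := by
    have : (n : ℂ) * ((n : ℂ) - 2 * p) * A = 0 := by
      linear_combination ((n : ℂ) - p) * h0 - (p : ℂ) * hAB2
    rcases mul_eq_zero.mp this with h | h
    · exact absurd (mul_eq_zero.mp h) (by tauto)
    · exact h
  have hBz : B = 0 := by
    have : ((n : ℂ) - p) * B = 0 := by linear_combination hAB2 - (p : ℂ) * hAz
    exact (mul_eq_zero.mp this).resolve_left hNP
  rcases mul_eq_zero.mp hAz with haz | hcz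
  · -- a = 0
    have hbne : b ≠ 0 := fun h => hdet (by rw [haz, h]; ring)
    have hcne : c ≠ 0 := fun h => hdet (by rw [haz, h]; ring)
    have hdz : (starRingEnd ℂ) d = 0 :=
      (mul_eq_zero.mp hBz).resolve_left hbne
    have : b * (starRingEnd ℂ) c = 0 := by
      have := hCz
      rw [hC, haz, hdz] at this
      linear_combination this
    rcases mul_eq_zero.mp this with h | h
    · exact hbne h
    · exact hcne ((map_eq_zero _).mp h)
  · -- conj c = 0, so c = 0
    have hc0 : c = 0 := (map_eq_zero _).mp hcz
    have hane : a ≠ 0 := fun h => hdet (by rw [hc0, h]; ring)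
    have hdne : d ≠ 0 := fun h => hdet (by rw [hc0, h]; ring)
    have hdcz : (starRingEnd ℂ) d ≠ 0 := fun h => hdne ((map_eq_zero _).mp h)
    have hb0 : b = 0 := (mul_eq_zero.mp hBz).resolve_right hdcz
    have : a * (starRingEnd ℂ) d = 0 := by
      have := hCz
      rw [hC, hb0] at this
      linear_combination this
    rcases mul_eq_zero.mp this with h | h
    · exact hane h
    · exact hdcz h

end
end

section
/- Assume n ≠ 2p. If L is a 2×2 complex matrix such that for every integer w ≥ 0 there exists a 2×2 complex matrix Λ_w with P_w(x)·L = Λ_w·P_w(x) for all real x, then L = c·Id for some complex number c; that is, every differential operator of order zero having the polynomials P_w as eigenfunctions is a scalar multiple of the identity. -/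
open scoped BigOperators Matrix

noncomputable section

/-! Only `w = 2` is needed: `P₂(x) = x² A + x B + C` with `A` a nonzero scalar matrix, `B`
antidiagonal with nonzero entries and `C` diagonal with distinct entries (this is where
`n ≠ 2p` enters). Evaluating `P₂(x) L = Λ P₂(x)` at `x = 0, ±1` gives the same relation for
`A`, `B` and `C` separately; for the scalar `A` it says `Λ = L`, so `L` commutes with `C`,
hence is diagonal, and with `B`, hence is scalar. -/

theorem Pw_two (p n x : ℝ) (hn : n + 1 ≠ 0) :
    Pw p n 2 x =
      (x : ℂ) ^ 2 • (((n : ℂ) + 3) / 2) • (1 : Matrix (Fin 2) (Fin 2) ℂ)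
        + (x : ℂ) • !![0, ((n : ℂ) + 3) / (p + 2); ((n : ℂ) + 3) / (n - p + 2), 0]
        + !![-1 / 2 + 1 / ((p : ℂ) + 2), 0; 0, -1 / 2 + 1 / ((n : ℂ) - p + 2)] := by
  have hn' : (n : ℂ) + 1 ≠ 0 := by exact_mod_cast hn
  ext i j
  fin_cases i <;> fin_cases j <;>
    norm_num [Pw, GegZ, Geg, show Int.toNat 2 = 2 from rfl] <;> field_simp <;> ring

/-- The hypotheses are `SemiconjBy (t² A + t B + C) L Λ` at `t = 0, 1, -1`. -/
theorem SemiconjBy.of_quadratic {R : Type*} [Ring R] [Algebra ℚ R] {A B C L Λ : R}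
    (h₀ : SemiconjBy C L Λ) (h₁ : SemiconjBy (A + B + C) L Λ)
    (hneg : SemiconjBy (A - B + C) L Λ) : SemiconjBy A L Λ ∧ SemiconjBy B L Λ := by
  have h2 : IsUnit (2 : R) := by
    simpa only [map_ofNat] using (isUnit_of_invertible (2 : ℚ)).map (algebraMap ℚ R)
  constructor <;> refine h2.mul_left_cancel ?_
  · calc 2 * (A * L) = (A + B + C) * L + (A - B + C) * L - 2 * (C * L) := by noncomm_ring
      _ = 2 * (Λ * A) := by rw [h₀.eq, h₁.eq, hneg.eq]; noncomm_ring
  · calc 2 * (B * L) = (A + B + C) * L - (A - B + C) * L := by noncomm_ring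
      _ = 2 * (Λ * B) := by rw [h₁.eq, hneg.eq]; noncomm_ring

theorem Matrix.eq_of_semiconjBy_smul_one {K m : Type*} [Field K] [Fintype m] [DecidableEq m]
    {c : K} (hc : c ≠ 0) {L Λ : Matrix m m K} (h : SemiconjBy (c • 1) L Λ) : L = Λ := by
  simpa [SemiconjBy, hc] using h

theorem Matrix.exists_eq_smul_one_of_commute_fin_two {K : Type*} [Field K]
    {L : Matrix (Fin 2) (Fin 2) K} {a b β γ : K} (hab : a ≠ b) (hβ : β ≠ 0)
    (hD : Commute L !![a, 0; 0, b]) (hN : Commute L !![0, β; γ, 0]) :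
    ∃ c : K, L = c • 1 := by
  have hD01 := congrFun₂ hD.eq 0 1
  have hD10 := congrFun₂ hD.eq 1 0
  have hN01 := congrFun₂ hN.eq 0 1
  simp only [Matrix.mul_apply, Fin.sum_univ_two, Matrix.of_apply, Matrix.cons_val',
    Matrix.cons_val_zero, Matrix.cons_val_one, Matrix.empty_val', Matrix.cons_val_fin_one,
    mul_zero, zero_mul, add_zero, zero_add] at hD01 hD10 hN01
  have h01 : L 0 1 = 0 := by
    simpa [sub_ne_zero.mpr hab] using (by linear_combination -hD01 : (a - b) * L 0 1 = 0)
  have h10 : L 1 0 = 0 := by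
    simpa [sub_ne_zero.mpr hab] using (by linear_combination hD10 : (a - b) * L 1 0 = 0)
  have h11 : L 1 1 = L 0 0 := mul_left_cancel₀ hβ (by linear_combination -hN01)
  refine ⟨L 0 0, Matrix.ext fun i j => ?_⟩
  fin_cases i <;> fin_cases j <;> simp [h01, h10, h11]

/-- for `n ≠ 2p`, every order-zero operator having the `P_w` as
eigenfunctions is a scalar multiple of the identity. -/
theorem statement11 (p n : ℝ) (hp : 0 < p) (hpn : p < n) (hn : n ≠ 2 * p)
    (L : Matrix (Fin 2) (Fin 2) ℂ)
    (hL : ∀ w : ℕ, ∃ Λ : Matrix (Fin 2) (Fin 2) ℂ, ∀ x : ℝ,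
      Pw p n w x * L = Λ * Pw p n w x) :
    ∃ c : ℂ, L = c • (1 : Matrix (Fin 2) (Fin 2) ℂ) := by
  obtain ⟨Λ, hΛ⟩ := hL 2
  simp only [Pw_two p n _ (by linarith)] at hΛ
  set A : Matrix (Fin 2) (Fin 2) ℂ := (((n : ℂ) + 3) / 2) • 1
  set B : Matrix (Fin 2) (Fin 2) ℂ :=
    !![0, ((n : ℂ) + 3) / (p + 2); ((n : ℂ) + 3) / (n - p + 2), 0]
  set C : Matrix (Fin 2) (Fin 2) ℂ :=
    !![-1 / 2 + 1 / ((p : ℂ) + 2), 0; 0, -1 / 2 + 1 / ((n : ℂ) - p + 2)]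
  have hC : SemiconjBy C L Λ := by simpa [SemiconjBy] using hΛ 0
  obtain ⟨hA, hB⟩ := SemiconjBy.of_quadratic hC
    (by simpa [SemiconjBy] using hΛ 1) (by simpa [SemiconjBy, sub_eq_add_neg] using hΛ (-1))
  have hn3 : (n : ℂ) + 3 ≠ 0 := by exact_mod_cast (by linarith : (0 : ℝ) < n + 3).ne'
  have hp2 : (p : ℂ) + 2 ≠ 0 := by exact_mod_cast (by linarith : (0 : ℝ) < p + 2).ne'
  have hab : -1 / 2 + 1 / ((p : ℂ) + 2) ≠ -1 / 2 + 1 / ((n : ℂ) - p + 2) := by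
    rw [Ne, add_right_inj, one_div, one_div, inv_inj]
    intro h
    exact hn (by linarith [(by exact_mod_cast h : p + 2 = n - p + 2)])
  obtain rfl : L = Λ := Matrix.eq_of_semiconjBy_smul_one (div_ne_zero hn3 two_ne_zero) hA
  exact Matrix.exists_eq_smul_one_of_commute_fin_two hab (div_ne_zero hn3 hp2) hC.symm hB.symm

end
end

section
/- Assume n ≠ 2p. If F₁ is a 2×2 complex matrix valued polynomial with deg F₁ ≤ 1 and F₀ is a constant 2×2 complex matrix such that for every integer w ≥ 0 there exists a 2×2 complex matrix Λ_w with P_w'(x)·F₁(x) + P_w(x)·F₀ = Λ_w·P_w(x) for all real x, then F₁ = 0 and F₀ is a scalar multiple of the identity; that is, there are no operators of order one having the polynomials P_w as eigenfunctions. -/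
open scoped BigOperators Matrix

noncomputable section

/-! Write `F₁ x = x A + B` and `F₀ = C`. For `w = 1, 2, 3` the polynomial `P_w` is an explicit cubic
whose coefficients are built from `K_w = diag(1/(p+w), 1/(n-p+w))` and the swap matrix `J`, so
comparing coefficients in `P_w' F₁ + P_w F₀ = Λ_w P_w` gives `Λ_w = w A + C` together with a few
matrix identities. The `x²` and `x⁰` identities for `w = 3` force `B = -J A`. Substituting this
into the constant term for `w = 2` and the linear term for `w = 3` gives, entrywise, two linear
relations between `A i j` and `C i j` whose difference is `(n + 6) A i j = 0`. Hence `A = B = 0`;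
then `C` commutes with `K_2`, whose diagonal entries differ because `n ≠ 2p`, and with `K_1 J`,
so `C` is scalar. -/

open Matrix

section Cubic

variable {M : Type*} [AddCommGroup M] [Module ℝ M]

def cubicFun (a b c d : M) (x : ℝ) : M := x ^ 3 • a + x ^ 2 • b + x • c + d

theorem eq_zero_of_forall_cubicFun_eq_zero {a b c d : M} (h : ∀ x, cubicFun a b c d x = 0) :
    a = 0 ∧ b = 0 ∧ c = 0 ∧ d = 0 := by
  have h0 := h 0
  have h1 := h 1
  have h2 := h (-1)
  have h3 := h 2
  norm_num [cubicFun] at h0 h1 h2 h3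
  refine ⟨?_, ?_, ?_, h0⟩
  · linear_combination (norm := module) (6⁻¹ : ℝ) • (h3 - (3 : ℝ) • h1 - h2 + (3 : ℝ) • h0)
  · linear_combination (norm := module) (2⁻¹ : ℝ) • (h1 + h2 - (2 : ℝ) • h0)
  · linear_combination (norm := module) (6⁻¹ : ℝ) • ((6 : ℝ) • h1 - (2 : ℝ) • h2 - h3 - (3 : ℝ) • h0)

end Cubic

theorem cubicFun_coeffs_of_forall_eq {R : Type*} [Ring R] [Algebra ℝ R] {Q₃ Q₂ Q₁ Q₀ A B C Λ : R}
    (h : ∀ x : ℝ, cubicFun 0 ((3 : ℝ) • Q₃) ((2 : ℝ) • Q₂) Q₁ x * (x • A + B)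
      + cubicFun Q₃ Q₂ Q₁ Q₀ x * C = Λ * cubicFun Q₃ Q₂ Q₁ Q₀ x) :
    Q₃ * ((3 : ℝ) • A + C) = Λ * Q₃ ∧
    Q₃ * ((3 : ℝ) • B) + Q₂ * ((2 : ℝ) • A + C) = Λ * Q₂ ∧
    Q₂ * ((2 : ℝ) • B) + Q₁ * (A + C) = Λ * Q₁ ∧
    Q₁ * B + Q₀ * C = Λ * Q₀ := by
  simp only [← sub_eq_zero (b := Λ * _)]
  apply eq_zero_of_forall_cubicFun_eq_zero
  intro x
  rw [← sub_eq_zero.mpr (h x)]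
  simp only [cubicFun, mul_add, add_mul, smul_mul_assoc, mul_smul_comm, smul_add, smul_sub,
    smul_smul, zero_mul, smul_zero]
  module

theorem eq_of_smul_one_mul_eq {R : Type*} [Ring R] [Algebra ℝ R] {κ : ℝ} (hκ : κ ≠ 0) {X Λ : R}
    (h : (κ • 1 : R) * X = Λ * (κ • 1)) : Λ = X := by
  rw [smul_mul_assoc, one_mul, mul_smul_comm, mul_one] at h
  exact smul_right_injective R hκ h.symm

theorem mderiv_cubicFun (Q₃ Q₂ Q₁ Q₀ : Matrix (Fin 2) (Fin 2) ℂ) (x : ℝ) :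
    mderiv (cubicFun Q₃ Q₂ Q₁ Q₀) x = cubicFun 0 ((3 : ℝ) • Q₃) ((2 : ℝ) • Q₂) Q₁ x := by
  ext i j
  have hderiv : HasDerivAt (fun t : ℝ => t ^ 3 • Q₃ i j + t ^ 2 • Q₂ i j + t • Q₁ i j + Q₀ i j)
      ((3 * x ^ 2) • Q₃ i j + (2 * x) • Q₂ i j + Q₁ i j) x := by
    simpa using ((((hasDerivAt_pow 3 x).smul_const (Q₃ i j)).add
      ((hasDerivAt_pow 2 x).smul_const (Q₂ i j))).add
      ((hasDerivAt_id x).smul_const (Q₁ i j))).add_const (Q₀ i j)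
  simp only [mderiv, cubicFun, of_apply, Matrix.add_apply, Matrix.smul_apply, smul_zero, zero_add,
    hderiv.deriv]
  module

theorem exists_smul_add_of_natDegree_le_one {ι κ : Type*} {F : ℝ → Matrix ι κ ℂ}
    (hF : ∀ i j, ∃ q : Polynomial ℂ, q.natDegree ≤ 1 ∧ ∀ x : ℝ, F x i j = q.eval (x : ℂ)) :
    ∃ A B : Matrix ι κ ℂ, ∀ x : ℝ, F x = x • A + B := by
  choose q hdeg hq using hF
  refine ⟨of fun i j => (q i j).coeff 1, of fun i j => (q i j).coeff 0, fun x => ?_⟩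
  ext i j
  rw [hq, Polynomial.eq_X_add_C_of_natDegree_le_one (hdeg i j)]
  simp [Complex.real_smul]
  ring

/-- With `E_w = Kmat p n w * swapMat`,
`P_w = C_w^{(n+1)/2} / (n+1) • 1 + C_{w-1}^{(n+3)/2} • E_w + C_{w-2}^{(n+3)/2} • K_w`. -/
def Kmat (p n : ℝ) (w : ℕ) : Matrix (Fin 2) (Fin 2) ℂ :=
  diagonal fun i => ((![p, n - p] i + w : ℝ) : ℂ)⁻¹

def swapMat : Matrix (Fin 2) (Fin 2) ℂ := !![0, 1; 1, 0]

theorem swapMat_mul_swapMat_mul (M : Matrix (Fin 2) (Fin 2) ℂ) : swapMat * (swapMat * M) = M := by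
  rw [← Matrix.mul_assoc]
  ext i j
  fin_cases i <;> fin_cases j <;> simp [swapMat, Matrix.mul_apply]

theorem isUnit_Kmat {p n : ℝ} (hp : 0 < p) (hpn : p < n) (w : ℕ) : IsUnit (Kmat p n w) := by
  rw [Kmat, isUnit_diagonal, Pi.isUnit_iff]
  intro i
  refine isUnit_iff_ne_zero.mpr (inv_ne_zero (Complex.ofReal_ne_zero.mpr ?_))
  fin_cases i <;> simp <;> linarith

section Pw

variable {p n : ℝ}

theorem Pw_one (hn : n + 1 ≠ 0) : Pw p n 1 = cubicFun 0 0 1 (Kmat p n 1 * swapMat) := by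
  have hn' : (n : ℂ) + 1 ≠ 0 := by exact_mod_cast hn
  ext x i j
  fin_cases i <;> fin_cases j <;>
    simp [Pw, GegZ, Geg, cubicFun, Kmat, swapMat] <;> field_simp

theorem Pw_two_s13 (hn : n + 1 ≠ 0) :
    Pw p n 2 = cubicFun 0 (((n + 3) / 2) • 1) ((n + 3) • (Kmat p n 2 * swapMat))
      (Kmat p n 2 - (2⁻¹ : ℝ) • 1) := by
  have hn' : (n : ℂ) + 1 ≠ 0 := by exact_mod_cast hn
  ext x i j
  fin_cases i <;> fin_cases j <;>
    simp [Pw, GegZ, Geg, cubicFun, Kmat, swapMat] <;> field_simp <;> ring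

theorem Pw_three (hn : n + 1 ≠ 0) :
    Pw p n 3 = cubicFun (((n + 3) * (n + 5) / 6) • 1)
      (((n + 3) * (n + 5) / 2) • (Kmat p n 3 * swapMat)) ((n + 3) • (Kmat p n 3 - (2⁻¹ : ℝ) • 1))
      (-((n + 3) / 2) • (Kmat p n 3 * swapMat)) := by
  have hn' : (n : ℂ) + 1 ≠ 0 := by exact_mod_cast hn
  ext x i j
  fin_cases i <;> fin_cases j <;>
    simp [Pw, GegZ, Geg, cubicFun, Kmat, swapMat] <;> field_simp <;> ring

end Pw

theorem eq_zero_of_sylvester_pair {n q r : ℝ} (hn : 0 < n) (hq : 0 < q) (hr : 0 < r) {a c : ℂ}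
    (h₂ : (((n + 3) / (q + 2) + 2 / (r + 2) - 1 : ℝ) : ℂ) * a
      = ((1 / (q + 2) - 1 / (r + 2) : ℝ) : ℂ) * c)
    (h₃ : (((n + 4) / (q + 3) + 3 / (r + 3) - 1 : ℝ) : ℂ) * a
      = ((1 / (q + 3) - 1 / (r + 3) : ℝ) : ℂ) * c) :
    a = 0 := by
  have hq₂ : (q : ℂ) + 2 ≠ 0 := by exact_mod_cast (by linarith : q + 2 ≠ 0)
  have hq₃ : (q : ℂ) + 3 ≠ 0 := by exact_mod_cast (by linarith : q + 3 ≠ 0)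
  have hr₂ : (r : ℂ) + 2 ≠ 0 := by exact_mod_cast (by linarith : r + 2 ≠ 0)
  have hr₃ : (r : ℂ) + 3 ≠ 0 := by exact_mod_cast (by linarith : r + 3 ≠ 0)
  have hn₆ : (n : ℂ) + 6 ≠ 0 := by exact_mod_cast (by linarith : n + 6 ≠ 0)
  push_cast at h₂ h₃
  refine (mul_eq_zero.mp ?_).resolve_left hn₆
  linear_combination (norm := (field_simp; ring))
    ((q : ℂ) + 3) * (r + 3) * h₃ - ((q : ℂ) + 2) * (r + 2) * h₂

theorem exists_eq_smul_one_of_commute {d e : Fin 2 → ℂ} {C : Matrix (Fin 2) (Fin 2) ℂ}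
    (hd : d 0 ≠ d 1) (he : e 0 ≠ 0) (h₁ : diagonal d * C = C * diagonal d)
    (h₂ : diagonal e * swapMat * C = C * (diagonal e * swapMat)) : ∃ c : ℂ, C = c • 1 := by
  have h01 := congr_fun (congr_fun h₁ 0) 1
  have h10 := congr_fun (congr_fun h₁ 1) 0
  have hdiag := congr_fun (congr_fun h₂ 0) 1
  simp only [diagonal_mul, mul_diagonal] at h01 h10
  simp [swapMat, Matrix.mul_apply, Fin.sum_univ_two, diagonal] at hdiag
  refine ⟨C 0 0, ?_⟩
  ext i j
  fin_cases i <;> fin_cases j <;> simp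
  · exact (mul_eq_zero.mp (by linear_combination h01 : (d 0 - d 1) * C 0 1 = 0)).resolve_left
      (sub_ne_zero.mpr hd)
  · exact (mul_eq_zero.mp (by linear_combination -h10 : (d 0 - d 1) * C 1 0 = 0)).resolve_left
      (sub_ne_zero.mpr hd)
  · exact mul_left_cancel₀ he (hdiag.trans (mul_comm _ _))

def OrderOneEigen (P : ℝ → Matrix (Fin 2) (Fin 2) ℂ) (A B C Λ : Matrix (Fin 2) (Fin 2) ℂ) : Prop :=
  ∀ x : ℝ, mderiv P x * (x • A + B) + P x * C = Λ * P x

namespace OrderOneEigen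

variable {p n : ℝ} {A B C Λ Λ' : Matrix (Fin 2) (Fin 2) ℂ}

theorem coeff_Pw_one (hn : n + 1 ≠ 0) (h : OrderOneEigen (Pw p n 1) A B C Λ) :
    B + Kmat p n 1 * swapMat * C = (A + C) * (Kmat p n 1 * swapMat) := by
  simp only [OrderOneEigen, Pw_one hn, mderiv_cubicFun] at h
  obtain ⟨-, -, hΛ, h₀⟩ := cubicFun_coeffs_of_forall_eq h
  simp only [zero_mul, zero_add, one_mul, mul_one] at hΛ h₀
  rwa [← hΛ] at h₀

theorem coeff_Pw_two (hn : n + 1 ≠ 0) (hn₃ : n + 3 ≠ 0) (h : OrderOneEigen (Pw p n 2) A B C Λ) :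
    (n + 3) • (Kmat p n 2 * swapMat * B) + (Kmat p n 2 - (2⁻¹ : ℝ) • 1) * C
      = ((2 : ℝ) • A + C) * (Kmat p n 2 - (2⁻¹ : ℝ) • 1) := by
  simp only [OrderOneEigen, Pw_two_s13 hn, mderiv_cubicFun] at h
  obtain ⟨-, hΛ, -, h₀⟩ := cubicFun_coeffs_of_forall_eq h
  rw [zero_mul, zero_add] at hΛ
  rwa [eq_of_smul_one_mul_eq (by positivity) hΛ, smul_mul_assoc] at h₀

theorem coeff_Pw_three (hn : n + 1 ≠ 0) (hn₃ : n + 3 ≠ 0) (hn₅ : n + 5 ≠ 0)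
    (h : OrderOneEigen (Pw p n 3) A B C Λ) :
    B + Kmat p n 3 * swapMat * ((2 : ℝ) • A + C) = ((3 : ℝ) • A + C) * (Kmat p n 3 * swapMat) ∧
    (n + 5) • (Kmat p n 3 * swapMat * B) + (Kmat p n 3 - (2⁻¹ : ℝ) • 1) * (A + C)
      = ((3 : ℝ) • A + C) * (Kmat p n 3 - (2⁻¹ : ℝ) • 1) ∧
    (2 : ℝ) • ((Kmat p n 3 - (2⁻¹ : ℝ) • 1) * B) - Kmat p n 3 * swapMat * C
      = -(((3 : ℝ) • A + C) * (Kmat p n 3 * swapMat)) := by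
  simp only [OrderOneEigen, Pw_three hn, mderiv_cubicFun] at h
  obtain ⟨hΛ, h₂, h₁, h₀⟩ := cubicFun_coeffs_of_forall_eq h
  obtain rfl := eq_of_smul_one_mul_eq (by positivity) hΛ
  refine ⟨smul_right_injective _ (r := (n + 3) * (n + 5) / 2) (by positivity) ?_,
    smul_right_injective _ (r := n + 3) hn₃ ?_,
    smul_right_injective _ (r := (n + 3) / 2) (by positivity) ?_⟩
  all_goals simp only [mul_add, add_mul, mul_sub, sub_mul, smul_mul_assoc, mul_smul_comm, smul_add,
    smul_sub, smul_smul, one_mul, mul_one, smul_neg] at h₂ h₁ h₀ ⊢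
  · linear_combination (norm := module) h₂
  · linear_combination (norm := module) h₁
  · linear_combination (norm := module) h₀

theorem eq_neg_swapMat_mul (hp : 0 < p) (hpn : p < n) (h : OrderOneEigen (Pw p n 3) A B C Λ) :
    B = -(swapMat * A) := by
  obtain ⟨h₂, -, h₀⟩ := h.coeff_Pw_three (by linarith) (by linarith) (by linarith)
  have hK : Kmat p n 3 * (B + swapMat * A) = 0 := by
    simp only [mul_add, add_mul, sub_mul, smul_mul_assoc, mul_smul_comm, smul_sub, smul_smul,
      one_mul, Matrix.mul_assoc] at h₂ h₀ ⊢
    linear_combination (norm := module) (2⁻¹ : ℝ) • (h₂ + h₀)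
  rwa [(isUnit_Kmat hp hpn 3).mul_right_eq_zero, add_eq_zero_iff_eq_neg] at hK

theorem eq_zero (hp : 0 < p) (hpn : p < n) (h₂ : OrderOneEigen (Pw p n 2) A B C Λ)
    (h₃ : OrderOneEigen (Pw p n 3) A B C Λ') : A = 0 := by
  have e₂ := h₂.coeff_Pw_two (by linarith) (by linarith)
  have e₃ := (h₃.coeff_Pw_three (by linarith) (by linarith) (by linarith)).2.1
  rw [h₃.eq_neg_swapMat_mul hp hpn] at e₂ e₃
  simp only [Matrix.mul_assoc, mul_neg, swapMat_mul_swapMat_mul] at e₂ e₃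
  have hq : ∀ i, 0 < ![p, n - p] i := by simp [Fin.forall_fin_two]; constructor <;> linarith
  ext i j
  have s₂ := congr_fun (congr_fun e₂ i) j
  have s₃ := congr_fun (congr_fun e₃ i) j
  simp [Kmat, sub_mul, mul_sub, diagonal_mul, mul_diagonal] at s₂ s₃
  refine eq_zero_of_sylvester_pair (by linarith) (hq i) (hq j) (c := C i j) ?_ ?_
  · push_cast
    linear_combination -s₂
  · push_cast
    linear_combination -s₃

theorem exists_eq_smul_one (hp : 0 < p) (hpn : p < n) (hn : n ≠ 2 * p)
    (h₁ : OrderOneEigen (Pw p n 1) 0 0 C Λ) (h₂ : OrderOneEigen (Pw p n 2) 0 0 C Λ') :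
    ∃ c : ℂ, C = c • 1 := by
  have e₁ := h₁.coeff_Pw_one (by linarith)
  have e₂ := h₂.coeff_Pw_two (by linarith) (by linarith)
  simp only [Matrix.mul_zero, smul_zero, zero_add, mul_sub, sub_mul, smul_mul_assoc, mul_smul_comm,
    one_mul, mul_one, sub_left_inj] at e₁ e₂
  refine exists_eq_smul_one_of_commute ?_ ?_ e₂ e₁
  · norm_num
    exact_mod_cast fun h : p = n - p => hn (by linarith)
  · norm_num
    exact_mod_cast (ne_of_gt (by linarith) : p + 1 ≠ 0)

end OrderOneEigen

/-- for `n ≠ 2p`, there are no operators of order one having the `P_w`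
as eigenfunctions: if `P_w'·F₁ + P_w·F₀ = Λ_w·P_w` for all `w`, then `F₁ = 0` and
`F₀` is a scalar multiple of the identity. -/
theorem statement13 (p n : ℝ) (hp : 0 < p) (hpn : p < n) (hn : n ≠ 2 * p)
    (F1 : ℝ → Matrix (Fin 2) (Fin 2) ℂ) (F0 : Matrix (Fin 2) (Fin 2) ℂ)
    (hF1 : ∀ i j, ∃ q : Polynomial ℂ, q.natDegree ≤ 1 ∧ ∀ x : ℝ, F1 x i j = q.eval (x : ℂ))
    (heig : ∀ w : ℕ, ∃ Λ : Matrix (Fin 2) (Fin 2) ℂ, ∀ x : ℝ,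
      mderiv (Pw p n w) x * F1 x + Pw p n w x * F0 = Λ * Pw p n w x) :
    (∀ x : ℝ, F1 x = 0) ∧ ∃ c : ℂ, F0 = c • (1 : Matrix (Fin 2) (Fin 2) ℂ) := by
  obtain ⟨A, B, hF⟩ := exists_smul_add_of_natDegree_le_one hF1
  choose Λ hΛ using heig
  have h : ∀ w, OrderOneEigen (Pw p n w) A B F0 (Λ w) := fun w x => by rw [← hF]; exact hΛ w x
  have hA : A = 0 := (h 2).eq_zero hp hpn (h 3)
  have hB : B = 0 := by rw [(h 3).eq_neg_swapMat_mul hp hpn, hA, Matrix.mul_zero, neg_zero]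
  subst hA hB
  exact ⟨fun x => by simp [hF], (h 1).exists_eq_smul_one hp hpn hn (h 2)⟩
end
end

section
/- For every 2×2 complex matrix valued polynomial P, the following operator identities hold identically in x: (P·D₁)·D₂ = 0, (P·D₂)·D₁ = 0, (P·D₁)·D₃ = 0, (P·D₄)·D₁ = 0, (P·D₂)·D₄ = 0, (P·D₃)·D₂ = 0, (P·D₃)·D₃ = 0, (P·D₄)·D₄ = 0, (P·D₃)·D₁ = (P·D₂)·D₃ − (n−2p)·(P·D₃), (P·D₁)·D₄ = (P·D₄)·D₂ − (n−2p)·(P·D₄), (P·D₃)·D₄ = (P·D₂)·D₂ − (n−2p)·(P·D₂), and (P·D₄)·D₃ = (P·D₁)·D₁ + (n−2p)·(P·D₁). -/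
open scoped BigOperators Matrix

noncomputable section

/-- The right-acting differential operator `D₁`. -/
def actD1 (p n : ℝ) (P : ℝ → Matrix (Fin 2) (Fin 2) ℂ) (x : ℝ) :
    Matrix (Fin 2) (Fin 2) ℂ :=
  mderiv (mderiv P) x * !![(x : ℂ) ^ 2, (x : ℂ); -(x : ℂ), -1]
    + mderiv P x * !![((n : ℂ) + 2) * (x : ℂ), (n : ℂ) - (p : ℂ) + 2; -(p : ℂ), 0]
    + P x * !![(p : ℂ) * ((n : ℂ) - (p : ℂ) + 1), 0; 0, 0]

/-- The right-acting differential operator `D₂`. -/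
def actD2 (p n : ℝ) (P : ℝ → Matrix (Fin 2) (Fin 2) ℂ) (x : ℝ) :
    Matrix (Fin 2) (Fin 2) ℂ :=
  mderiv (mderiv P) x * !![-1, -(x : ℂ); (x : ℂ), (x : ℂ) ^ 2]
    + mderiv P x * !![0, (p : ℂ) - (n : ℂ); (p : ℂ) + 2, ((n : ℂ) + 2) * (x : ℂ)]
    + P x * !![0, 0; 0, ((p : ℂ) + 1) * ((n : ℂ) - (p : ℂ))]

/-- The right-acting differential operator `D₃`. -/
def actD3 (p n : ℝ) (P : ℝ → Matrix (Fin 2) (Fin 2) ℂ) (x : ℝ) :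
    Matrix (Fin 2) (Fin 2) ℂ :=
  mderiv (mderiv P) x * !![-(x : ℂ), -1; (x : ℂ) ^ 2, (x : ℂ)]
    + mderiv P x * !![-(p : ℂ), 0; 2 * ((p : ℂ) + 1) * (x : ℂ), (p : ℂ) + 2]
    + P x * !![0, 0; (p : ℂ) * ((p : ℂ) + 1), 0]

/-- The right-acting differential operator `D₄`. -/
def actD4 (p n : ℝ) (P : ℝ → Matrix (Fin 2) (Fin 2) ℂ) (x : ℝ) :
    Matrix (Fin 2) (Fin 2) ℂ :=
  mderiv (mderiv P) x * !![(x : ℂ), (x : ℂ) ^ 2; -1, -(x : ℂ)]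
    + mderiv P x * !![(n : ℂ) - (p : ℂ) + 2, 2 * ((n : ℂ) - (p : ℂ) + 1) * (x : ℂ);
                      0, (p : ℂ) - (n : ℂ)]
    + P x * !![0, ((n : ℂ) - (p : ℂ)) * ((n : ℂ) - (p : ℂ) + 1); 0, 0]


open Polynomial

private def ev (q : Polynomial ℂ) (x : ℝ) : ℂ := q.eval (x : ℂ)

private def pm (a b c d : Polynomial ℂ) (x : ℝ) : Matrix (Fin 2) (Fin 2) ℂ :=
  !![ev a x, ev b x; ev c x, ev d x]

private lemma hasDerivAt_ev (q : Polynomial ℂ) (x : ℝ) :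
    HasDerivAt (ev q) (ev q.derivative x) x :=
  (q.hasDerivAt (x : ℂ)).comp_ofReal

private lemma mderiv_pm (a b c d : Polynomial ℂ) (P : ℝ → Matrix (Fin 2) (Fin 2) ℂ)
    (h : ∀ x, P x = pm a b c d x) (x : ℝ) :
    mderiv P x = pm a.derivative b.derivative c.derivative d.derivative x := by
  ext i j
  have h0 : ∀ i j q, (∀ t : ℝ, P t i j = ev q t) → mderiv P x i j = ev q.derivative x := by
    intro i j q hq
    have : (fun t => P t i j) = ev q := funext hq
    simp only [mderiv, Matrix.of_apply, this]
    exact (hasDerivAt_ev q x).deriv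
  fin_cases i <;> fin_cases j
  · exact h0 _ _ a (fun t => by rw [h t]; rfl)
  · exact h0 _ _ b (fun t => by rw [h t]; rfl)
  · exact h0 _ _ c (fun t => by rw [h t]; rfl)
  · exact h0 _ _ d (fun t => by rw [h t]; rfl)

private def d1 (a : Polynomial ℂ) : Polynomial ℂ := a.derivative
private def dd (a : Polynomial ℂ) : Polynomial ℂ := a.derivative.derivative

private def T1a (p n : ℝ) (a b : Polynomial ℂ) : Polynomial ℂ :=
  dd a * (X*X) - dd b * X + (C (n:ℂ) + 2) * d1 a * X - C (p:ℂ) * d1 b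
    + C (p:ℂ) * (C (n:ℂ) - C (p:ℂ) + 1) * a
private def T1b (p n : ℝ) (a b : Polynomial ℂ) : Polynomial ℂ :=
  dd a * X - dd b + (C (n:ℂ) - C (p:ℂ) + 2) * d1 a
private def T2a (p n : ℝ) (a b : Polynomial ℂ) : Polynomial ℂ :=
  - dd a + dd b * X + (C (p:ℂ) + 2) * d1 b
private def T2b (p n : ℝ) (a b : Polynomial ℂ) : Polynomial ℂ :=
  - dd a * X + dd b * (X*X) + (C (p:ℂ) - C (n:ℂ)) * d1 a + (C (n:ℂ) + 2) * d1 b * X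
    + (C (p:ℂ) + 1) * (C (n:ℂ) - C (p:ℂ)) * b
private def T3a (p n : ℝ) (a b : Polynomial ℂ) : Polynomial ℂ :=
  - dd a * X + dd b * (X*X) - C (p:ℂ) * d1 a + 2 * (C (p:ℂ) + 1) * d1 b * X
    + C (p:ℂ) * (C (p:ℂ) + 1) * b
private def T3b (p n : ℝ) (a b : Polynomial ℂ) : Polynomial ℂ :=
  - dd a + dd b * X + (C (p:ℂ) + 2) * d1 b
private def T4a (p n : ℝ) (a b : Polynomial ℂ) : Polynomial ℂ :=
  dd a * X - dd b + (C (n:ℂ) - C (p:ℂ) + 2) * d1 a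
private def T4b (p n : ℝ) (a b : Polynomial ℂ) : Polynomial ℂ :=
  dd a * (X*X) - dd b * X + 2 * (C (n:ℂ) - C (p:ℂ) + 1) * d1 a * X
    + (C (p:ℂ) - C (n:ℂ)) * d1 b + (C (n:ℂ) - C (p:ℂ)) * (C (n:ℂ) - C (p:ℂ) + 1) * a

private lemma actD1_pm (p n : ℝ) (a b c d : Polynomial ℂ) (P : ℝ → Matrix (Fin 2) (Fin 2) ℂ)
    (h : ∀ x, P x = pm a b c d x) (x : ℝ) :
    actD1 p n P x = pm (T1a p n a b) (T1b p n a b) (T1a p n c d) (T1b p n c d) x := by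
  have hd := mderiv_pm a b c d P h
  have hdd := mderiv_pm _ _ _ _ _ hd
  unfold actD1
  rw [hdd x, hd x, h x]
  ext i j
  fin_cases i <;> fin_cases j <;>
    simp [pm, ev, T1a, T1b, d1, dd, Matrix.mul_apply, Fin.sum_univ_two] <;>
    ring

private lemma actD2_pm (p n : ℝ) (a b c d : Polynomial ℂ) (P : ℝ → Matrix (Fin 2) (Fin 2) ℂ)
    (h : ∀ x, P x = pm a b c d x) (x : ℝ) :
    actD2 p n P x = pm (T2a p n a b) (T2b p n a b) (T2a p n c d) (T2b p n c d) x := by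
  have hd := mderiv_pm a b c d P h
  have hdd := mderiv_pm _ _ _ _ _ hd
  unfold actD2
  rw [hdd x, hd x, h x]
  ext i j
  fin_cases i <;> fin_cases j <;>
    simp [pm, ev, T2a, T2b, d1, dd, Matrix.mul_apply, Fin.sum_univ_two] <;>
    ring

private lemma actD3_pm (p n : ℝ) (a b c d : Polynomial ℂ) (P : ℝ → Matrix (Fin 2) (Fin 2) ℂ)
    (h : ∀ x, P x = pm a b c d x) (x : ℝ) :
    actD3 p n P x = pm (T3a p n a b) (T3b p n a b) (T3a p n c d) (T3b p n c d) x := by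
  have hd := mderiv_pm a b c d P h
  have hdd := mderiv_pm _ _ _ _ _ hd
  unfold actD3
  rw [hdd x, hd x, h x]
  ext i j
  fin_cases i <;> fin_cases j <;>
    simp [pm, ev, T3a, T3b, d1, dd, Matrix.mul_apply, Fin.sum_univ_two] <;>
    ring

private lemma actD4_pm (p n : ℝ) (a b c d : Polynomial ℂ) (P : ℝ → Matrix (Fin 2) (Fin 2) ℂ)
    (h : ∀ x, P x = pm a b c d x) (x : ℝ) :
    actD4 p n P x = pm (T4a p n a b) (T4b p n a b) (T4a p n c d) (T4b p n c d) x := by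
  have hd := mderiv_pm a b c d P h
  have hdd := mderiv_pm _ _ _ _ _ hd
  unfold actD4
  rw [hdd x, hd x, h x]
  ext i j
  fin_cases i <;> fin_cases j <;>
    simp [pm, ev, T4a, T4b, d1, dd, Matrix.mul_apply, Fin.sum_univ_two] <;>
    ring

private lemma comp21a (p n : ℝ) (a b : Polynomial ℂ) :
    T2a p n (T1a p n a b) (T1b p n a b) = 0 := by
  simp only [T1a, T1b, T2a, T2b, T3a, T3b, T4a, T4b, d1, dd]
  simp only [derivative_add, derivative_sub, derivative_mul, derivative_neg,
    derivative_C, derivative_X, derivative_ofNat, derivative_one, derivative_zero]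
  ring

private lemma comp21b (p n : ℝ) (a b : Polynomial ℂ) :
    T2b p n (T1a p n a b) (T1b p n a b) = 0 := by
  simp only [T1a, T1b, T2a, T2b, T3a, T3b, T4a, T4b, d1, dd]
  simp only [derivative_add, derivative_sub, derivative_mul, derivative_neg,
    derivative_C, derivative_X, derivative_ofNat, derivative_one, derivative_zero]
  ring

private lemma comp12a (p n : ℝ) (a b : Polynomial ℂ) :
    T1a p n (T2a p n a b) (T2b p n a b) = 0 := by
  simp only [T1a, T1b, T2a, T2b, T3a, T3b, T4a, T4b, d1, dd]
  simp only [derivative_add, derivative_sub, derivative_mul, derivative_neg,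
    derivative_C, derivative_X, derivative_ofNat, derivative_one, derivative_zero]
  ring

private lemma comp12b (p n : ℝ) (a b : Polynomial ℂ) :
    T1b p n (T2a p n a b) (T2b p n a b) = 0 := by
  simp only [T1a, T1b, T2a, T2b, T3a, T3b, T4a, T4b, d1, dd]
  simp only [derivative_add, derivative_sub, derivative_mul, derivative_neg,
    derivative_C, derivative_X, derivative_ofNat, derivative_one, derivative_zero]
  ring

private lemma comp31a (p n : ℝ) (a b : Polynomial ℂ) :
    T3a p n (T1a p n a b) (T1b p n a b) = 0 := by
  simp only [T1a, T1b, T2a, T2b, T3a, T3b, T4a, T4b, d1, dd]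
  simp only [derivative_add, derivative_sub, derivative_mul, derivative_neg,
    derivative_C, derivative_X, derivative_ofNat, derivative_one, derivative_zero]
  ring

private lemma comp31b (p n : ℝ) (a b : Polynomial ℂ) :
    T3b p n (T1a p n a b) (T1b p n a b) = 0 := by
  simp only [T1a, T1b, T2a, T2b, T3a, T3b, T4a, T4b, d1, dd]
  simp only [derivative_add, derivative_sub, derivative_mul, derivative_neg,
    derivative_C, derivative_X, derivative_ofNat, derivative_one, derivative_zero]
  ring

private lemma comp14a (p n : ℝ) (a b : Polynomial ℂ) :
    T1a p n (T4a p n a b) (T4b p n a b) = 0 := by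
  simp only [T1a, T1b, T2a, T2b, T3a, T3b, T4a, T4b, d1, dd]
  simp only [derivative_add, derivative_sub, derivative_mul, derivative_neg,
    derivative_C, derivative_X, derivative_ofNat, derivative_one, derivative_zero]
  ring

private lemma comp14b (p n : ℝ) (a b : Polynomial ℂ) :
    T1b p n (T4a p n a b) (T4b p n a b) = 0 := by
  simp only [T1a, T1b, T2a, T2b, T3a, T3b, T4a, T4b, d1, dd]
  simp only [derivative_add, derivative_sub, derivative_mul, derivative_neg,
    derivative_C, derivative_X, derivative_ofNat, derivative_one, derivative_zero]
  ring

private lemma comp42a (p n : ℝ) (a b : Polynomial ℂ) :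
    T4a p n (T2a p n a b) (T2b p n a b) = 0 := by
  simp only [T1a, T1b, T2a, T2b, T3a, T3b, T4a, T4b, d1, dd]
  simp only [derivative_add, derivative_sub, derivative_mul, derivative_neg,
    derivative_C, derivative_X, derivative_ofNat, derivative_one, derivative_zero]
  ring

private lemma comp42b (p n : ℝ) (a b : Polynomial ℂ) :
    T4b p n (T2a p n a b) (T2b p n a b) = 0 := by
  simp only [T1a, T1b, T2a, T2b, T3a, T3b, T4a, T4b, d1, dd]
  simp only [derivative_add, derivative_sub, derivative_mul, derivative_neg,
    derivative_C, derivative_X, derivative_ofNat, derivative_one, derivative_zero]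
  ring

private lemma comp23a (p n : ℝ) (a b : Polynomial ℂ) :
    T2a p n (T3a p n a b) (T3b p n a b) = 0 := by
  simp only [T1a, T1b, T2a, T2b, T3a, T3b, T4a, T4b, d1, dd]
  simp only [derivative_add, derivative_sub, derivative_mul, derivative_neg,
    derivative_C, derivative_X, derivative_ofNat, derivative_one, derivative_zero]
  ring

private lemma comp23b (p n : ℝ) (a b : Polynomial ℂ) :
    T2b p n (T3a p n a b) (T3b p n a b) = 0 := by
  simp only [T1a, T1b, T2a, T2b, T3a, T3b, T4a, T4b, d1, dd]
  simp only [derivative_add, derivative_sub, derivative_mul, derivative_neg,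
    derivative_C, derivative_X, derivative_ofNat, derivative_one, derivative_zero]
  ring

private lemma comp33a (p n : ℝ) (a b : Polynomial ℂ) :
    T3a p n (T3a p n a b) (T3b p n a b) = 0 := by
  simp only [T1a, T1b, T2a, T2b, T3a, T3b, T4a, T4b, d1, dd]
  simp only [derivative_add, derivative_sub, derivative_mul, derivative_neg,
    derivative_C, derivative_X, derivative_ofNat, derivative_one, derivative_zero]
  ring

private lemma comp33b (p n : ℝ) (a b : Polynomial ℂ) :
    T3b p n (T3a p n a b) (T3b p n a b) = 0 := by
  simp only [T1a, T1b, T2a, T2b, T3a, T3b, T4a, T4b, d1, dd]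
  simp only [derivative_add, derivative_sub, derivative_mul, derivative_neg,
    derivative_C, derivative_X, derivative_ofNat, derivative_one, derivative_zero]
  ring

private lemma comp44a (p n : ℝ) (a b : Polynomial ℂ) :
    T4a p n (T4a p n a b) (T4b p n a b) = 0 := by
  simp only [T1a, T1b, T2a, T2b, T3a, T3b, T4a, T4b, d1, dd]
  simp only [derivative_add, derivative_sub, derivative_mul, derivative_neg,
    derivative_C, derivative_X, derivative_ofNat, derivative_one, derivative_zero]
  ring

private lemma comp44b (p n : ℝ) (a b : Polynomial ℂ) :
    T4b p n (T4a p n a b) (T4b p n a b) = 0 := by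
  simp only [T1a, T1b, T2a, T2b, T3a, T3b, T4a, T4b, d1, dd]
  simp only [derivative_add, derivative_sub, derivative_mul, derivative_neg,
    derivative_C, derivative_X, derivative_ofNat, derivative_one, derivative_zero]
  ring

private lemma idlem9a (p n : ℝ) (a b : Polynomial ℂ) :
    T1a p n (T3a p n a b) (T3b p n a b)
      = T3a p n (T2a p n a b) (T2b p n a b)
        - (C (n:ℂ) - 2 * C (p:ℂ)) * T3a p n a b := by
  simp only [T1a, T1b, T2a, T2b, T3a, T3b, T4a, T4b, d1, dd]
  simp only [derivative_add, derivative_sub, derivative_mul, derivative_neg,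
    derivative_C, derivative_X, derivative_ofNat, derivative_one, derivative_zero]
  ring

private lemma idlem9b (p n : ℝ) (a b : Polynomial ℂ) :
    T1b p n (T3a p n a b) (T3b p n a b)
      = T3b p n (T2a p n a b) (T2b p n a b)
        - (C (n:ℂ) - 2 * C (p:ℂ)) * T3b p n a b := by
  simp only [T1a, T1b, T2a, T2b, T3a, T3b, T4a, T4b, d1, dd]
  simp only [derivative_add, derivative_sub, derivative_mul, derivative_neg,
    derivative_C, derivative_X, derivative_ofNat, derivative_one, derivative_zero]
  ring

private lemma idlem10a (p n : ℝ) (a b : Polynomial ℂ) :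
    T4a p n (T1a p n a b) (T1b p n a b)
      = T2a p n (T4a p n a b) (T4b p n a b)
        - (C (n:ℂ) - 2 * C (p:ℂ)) * T4a p n a b := by
  simp only [T1a, T1b, T2a, T2b, T3a, T3b, T4a, T4b, d1, dd]
  simp only [derivative_add, derivative_sub, derivative_mul, derivative_neg,
    derivative_C, derivative_X, derivative_ofNat, derivative_one, derivative_zero]
  ring

private lemma idlem10b (p n : ℝ) (a b : Polynomial ℂ) :
    T4b p n (T1a p n a b) (T1b p n a b)
      = T2b p n (T4a p n a b) (T4b p n a b)
        - (C (n:ℂ) - 2 * C (p:ℂ)) * T4b p n a b := by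
  simp only [T1a, T1b, T2a, T2b, T3a, T3b, T4a, T4b, d1, dd]
  simp only [derivative_add, derivative_sub, derivative_mul, derivative_neg,
    derivative_C, derivative_X, derivative_ofNat, derivative_one, derivative_zero]
  ring

private lemma idlem11a (p n : ℝ) (a b : Polynomial ℂ) :
    T4a p n (T3a p n a b) (T3b p n a b)
      = T2a p n (T2a p n a b) (T2b p n a b)
        - (C (n:ℂ) - 2 * C (p:ℂ)) * T2a p n a b := by
  simp only [T1a, T1b, T2a, T2b, T3a, T3b, T4a, T4b, d1, dd]
  simp only [derivative_add, derivative_sub, derivative_mul, derivative_neg,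
    derivative_C, derivative_X, derivative_ofNat, derivative_one, derivative_zero]
  ring

private lemma idlem11b (p n : ℝ) (a b : Polynomial ℂ) :
    T4b p n (T3a p n a b) (T3b p n a b)
      = T2b p n (T2a p n a b) (T2b p n a b)
        - (C (n:ℂ) - 2 * C (p:ℂ)) * T2b p n a b := by
  simp only [T1a, T1b, T2a, T2b, T3a, T3b, T4a, T4b, d1, dd]
  simp only [derivative_add, derivative_sub, derivative_mul, derivative_neg,
    derivative_C, derivative_X, derivative_ofNat, derivative_one, derivative_zero]
  ring

private lemma idlem12a (p n : ℝ) (a b : Polynomial ℂ) :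
    T3a p n (T4a p n a b) (T4b p n a b)
      = T1a p n (T1a p n a b) (T1b p n a b)
        + (C (n:ℂ) - 2 * C (p:ℂ)) * T1a p n a b := by
  simp only [T1a, T1b, T2a, T2b, T3a, T3b, T4a, T4b, d1, dd]
  simp only [derivative_add, derivative_sub, derivative_mul, derivative_neg,
    derivative_C, derivative_X, derivative_ofNat, derivative_one, derivative_zero]
  ring

private lemma idlem12b (p n : ℝ) (a b : Polynomial ℂ) :
    T3b p n (T4a p n a b) (T4b p n a b)
      = T1b p n (T1a p n a b) (T1b p n a b)
        + (C (n:ℂ) - 2 * C (p:ℂ)) * T1b p n a b := by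
  simp only [T1a, T1b, T2a, T2b, T3a, T3b, T4a, T4b, d1, dd]
  simp only [derivative_add, derivative_sub, derivative_mul, derivative_neg,
    derivative_C, derivative_X, derivative_ofNat, derivative_one, derivative_zero]
  ring

private lemma pm_zero (x : ℝ) : pm 0 0 0 0 x = 0 := by
  ext i j; fin_cases i <;> fin_cases j <;> simp [pm, ev]

private lemma pm_sub_smul (p n : ℝ) (q1 q2 q3 q4 r1 r2 r3 r4 : Polynomial ℂ) (x : ℝ) :
    pm q1 q2 q3 q4 x - ((n - 2 * p : ℝ) : ℂ) • pm r1 r2 r3 r4 x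
      = pm (q1 - (C (n:ℂ) - 2 * C (p:ℂ)) * r1) (q2 - (C (n:ℂ) - 2 * C (p:ℂ)) * r2)
          (q3 - (C (n:ℂ) - 2 * C (p:ℂ)) * r3) (q4 - (C (n:ℂ) - 2 * C (p:ℂ)) * r4) x := by
  ext i j
  fin_cases i <;> fin_cases j <;>
    simp [pm, ev, Matrix.smul_apply, Matrix.sub_apply] <;> push_cast <;> ring

private lemma pm_add_smul (p n : ℝ) (q1 q2 q3 q4 r1 r2 r3 r4 : Polynomial ℂ) (x : ℝ) :
    pm q1 q2 q3 q4 x + ((n - 2 * p : ℝ) : ℂ) • pm r1 r2 r3 r4 x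
      = pm (q1 + (C (n:ℂ) - 2 * C (p:ℂ)) * r1) (q2 + (C (n:ℂ) - 2 * C (p:ℂ)) * r2)
          (q3 + (C (n:ℂ) - 2 * C (p:ℂ)) * r3) (q4 + (C (n:ℂ) - 2 * C (p:ℂ)) * r4) x := by
  ext i j
  fin_cases i <;> fin_cases j <;>
    simp [pm, ev, Matrix.smul_apply, Matrix.add_apply] <;> push_cast <;> ring


/-- the operator identities among `D₁, D₂, D₃, D₄`, valid on every
matrix valued polynomial `P`, identically in `x`. -/
theorem statement16 (p n : ℝ) (hp : 0 < p) (hpn : p < n)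
    (P : ℝ → Matrix (Fin 2) (Fin 2) ℂ) (hP : IsPolyMat P) (x : ℝ) :
    actD2 p n (actD1 p n P) x = 0 ∧
    actD1 p n (actD2 p n P) x = 0 ∧
    actD3 p n (actD1 p n P) x = 0 ∧
    actD1 p n (actD4 p n P) x = 0 ∧
    actD4 p n (actD2 p n P) x = 0 ∧
    actD2 p n (actD3 p n P) x = 0 ∧
    actD3 p n (actD3 p n P) x = 0 ∧
    actD4 p n (actD4 p n P) x = 0 ∧
    actD1 p n (actD3 p n P) x
      = actD3 p n (actD2 p n P) x - ((n - 2 * p : ℝ) : ℂ) • actD3 p n P x ∧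
    actD4 p n (actD1 p n P) x
      = actD2 p n (actD4 p n P) x - ((n - 2 * p : ℝ) : ℂ) • actD4 p n P x ∧
    actD4 p n (actD3 p n P) x
      = actD2 p n (actD2 p n P) x - ((n - 2 * p : ℝ) : ℂ) • actD2 p n P x ∧
    actD3 p n (actD4 p n P) x
      = actD1 p n (actD1 p n P) x + ((n - 2 * p : ℝ) : ℂ) • actD1 p n P x := by
  obtain ⟨qa, hqa⟩ := hP 0 0
  obtain ⟨qb, hqb⟩ := hP 0 1
  obtain ⟨qc, hqc⟩ := hP 1 0
  obtain ⟨qd, hqd⟩ := hP 1 1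
  have h : ∀ x, P x = pm qa qb qc qd x := by
    intro x; ext i j; fin_cases i <;> fin_cases j
    · exact hqa x
    · exact hqb x
    · exact hqc x
    · exact hqd x
  have h1 := actD1_pm p n qa qb qc qd P h
  have h2 := actD2_pm p n qa qb qc qd P h
  have h3 := actD3_pm p n qa qb qc qd P h
  have h4 := actD4_pm p n qa qb qc qd P h
  refine ⟨?_, ?_, ?_, ?_, ?_, ?_, ?_, ?_, ?_, ?_, ?_, ?_⟩
  · rw [actD2_pm p n _ _ _ _ _ h1 x]
    simp only [comp21a, comp21b]; exact pm_zero x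
  · rw [actD1_pm p n _ _ _ _ _ h2 x]
    simp only [comp12a, comp12b]; exact pm_zero x
  · rw [actD3_pm p n _ _ _ _ _ h1 x]
    simp only [comp31a, comp31b]; exact pm_zero x
  · rw [actD1_pm p n _ _ _ _ _ h4 x]
    simp only [comp14a, comp14b]; exact pm_zero x
  · rw [actD4_pm p n _ _ _ _ _ h2 x]
    simp only [comp42a, comp42b]; exact pm_zero x
  · rw [actD2_pm p n _ _ _ _ _ h3 x]
    simp only [comp23a, comp23b]; exact pm_zero x
  · rw [actD3_pm p n _ _ _ _ _ h3 x]
    simp only [comp33a, comp33b]; exact pm_zero x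
  · rw [actD4_pm p n _ _ _ _ _ h4 x]
    simp only [comp44a, comp44b]; exact pm_zero x
  · rw [actD1_pm p n _ _ _ _ _ h3 x, actD3_pm p n _ _ _ _ _ h2 x, h3 x,
      pm_sub_smul]
    simp only [idlem9a, idlem9b]
  · rw [actD4_pm p n _ _ _ _ _ h1 x, actD2_pm p n _ _ _ _ _ h4 x, h4 x,
      pm_sub_smul]
    simp only [idlem10a, idlem10b]
  · rw [actD4_pm p n _ _ _ _ _ h3 x, actD2_pm p n _ _ _ _ _ h2 x, h2 x,
      pm_sub_smul]
    simp only [idlem11a, idlem11b]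
  · rw [actD3_pm p n _ _ _ _ _ h4 x, actD1_pm p n _ _ _ _ _ h1 x, h1 x,
      pm_add_smul]
    simp only [idlem12a, idlem12b]
  

end
end

section
/- The operators D₁ and D₃ do not commute: there exist a 2×2 complex matrix valued polynomial P and a real number x such that ((P·D₃)·D₁)(x) ≠ ((P·D₁)·D₃)(x). Consequently, the algebra of right-acting differential operators having all the polynomials P_w as simultaneous eigenfunctions is noncommutative. -/
open scoped BigOperators Matrix

noncomputable section

lemma mderiv_const (C : Matrix (Fin 2) (Fin 2) ℂ) : mderiv (fun _ => C) = fun _ => 0 := by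
  funext x
  ext i j
  simp [mderiv]

lemma isPolyMat_const (C : Matrix (Fin 2) (Fin 2) ℂ) : IsPolyMat fun _ => C :=
  fun i j => ⟨Polynomial.C (C i j), fun _ => Polynomial.eval_C.symm⟩

section ConstantCoefficients

variable (p n : ℝ) (C : Matrix (Fin 2) (Fin 2) ℂ)

lemma actD1_const :
    actD1 p n (fun _ => C) = fun _ => C * !![(p : ℂ) * ((n : ℂ) - (p : ℂ) + 1), 0; 0, 0] := by
  funext x
  simp [actD1, mderiv_const]

lemma actD3_const :
    actD3 p n (fun _ => C) = fun _ => C * !![0, 0; (p : ℂ) * ((p : ℂ) + 1), 0] := by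
  funext x
  simp [actD3, mderiv_const]

end ConstantCoefficients

/-- the operators `D₁` and `D₃` do not commute: there are a matrix
valued polynomial `P` and a point `x` with `((P·D₃)·D₁)(x) ≠ ((P·D₁)·D₃)(x)`. -/
theorem statement17 (p n : ℝ) (hp : 0 < p) (hpn : p < n) :
    ∃ P : ℝ → Matrix (Fin 2) (Fin 2) ℂ, IsPolyMat P ∧
      ∃ x : ℝ, actD1 p n (actD3 p n P) x ≠ actD3 p n (actD1 p n P) x := by
  refine ⟨fun _ => 1, isPolyMat_const 1, 0, fun h => ?_⟩
  -- `F₀⁽¹⁾ F₀⁽³⁾ = 0`, while `F₀⁽³⁾ F₀⁽¹⁾` has the entry `p(p+1) · p(n-p+1)` at `(1,0)`.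
  have hentry := congrFun (congrFun h 1) 0
  simp only [actD1_const, actD3_const, Matrix.one_mul] at hentry
  have hpos : 0 < p * (p + 1) * (p * (n - p + 1)) := by
    have := sub_pos.mpr hpn
    positivity
  have hne : (p : ℂ) * ((p : ℂ) + 1) * ((p : ℂ) * ((n : ℂ) - (p : ℂ) + 1)) ≠ 0 := by
    exact_mod_cast hpos.ne'
  exact hne (by simpa [Matrix.mul_apply, Fin.sum_univ_two] using hentry)
end
end

section
/- The operators D₁ and D₂ are symmetric with respect to W, and the adjoint of D₃ is (p/(n−p))·D₄: for all 2×2 complex matrix valued polynomials P and Q, ⟨P·D₁, Q⟩ = ⟨P, Q·D₁⟩, ⟨P·D₂, Q⟩ = ⟨P, Q·D₂⟩, and (n−p)·⟨P·D₃, Q⟩ = p·⟨P, Q·D₄⟩. -/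
/-!
Write `W = w • Φ` with `w(x) = (1 - x²)^(n/2 - 1)` and `Φ` a polynomial matrix, and represent
`P`, `Q` by polynomial matrices `A`, `B`. For each of the three identities there are polynomial
matrices `U`, `V` such that, with `T = A' U B* + A V B* - A U B*'`, the difference of the two
integrands (multiplied by the constants of the identity) equals
`w • (-n x T + (1 - x²) T') = ((1 - x²)^(n/2) T)'`. This holds for all `A`, `B` as soon as `U`
and `V` satisfy five coefficient identities (the symmetry equations), which are finite
computations with `2 × 2` polynomial matrices. Since `n > 0`, the boundary term
`(1 - x²)^(n/2) T` vanishes at `±1`, so the two integrals agree.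
-/

open scoped BigOperators Matrix

noncomputable section

open Polynomial Matrix Set MeasureTheory

namespace Matrix

variable {ι κ ν R : Type*}

def derivMat [CommRing R] (A : Matrix ι κ R[X]) : Matrix ι κ R[X] := A.map derivative

@[simp] lemma derivMat_apply [CommRing R] (A : Matrix ι κ R[X]) (i : ι) (j : κ) :
    derivMat A i j = derivative (A i j) := rfl

lemma derivMat_add [CommRing R] (A B : Matrix ι κ R[X]) :
    derivMat (A + B) = derivMat A + derivMat B := by
  ext; simp

lemma derivMat_sub [CommRing R] (A B : Matrix ι κ R[X]) :
    derivMat (A - B) = derivMat A - derivMat B := by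
  ext; simp

lemma derivMat_mul [CommRing R] [Fintype κ] (A : Matrix ι κ R[X]) (B : Matrix κ ν R[X]) :
    derivMat (A * B) = derivMat A * B + A * derivMat B := by
  ext; simp [Matrix.mul_apply, derivative_mul, Finset.sum_add_distrib]

def polyConjTranspose [CommSemiring R] [StarRing R] (B : Matrix ι κ R[X]) : Matrix κ ι R[X] :=
  (B.map (Polynomial.map (starRingEnd R)))ᵀ

@[simp] lemma polyConjTranspose_apply [CommSemiring R] [StarRing R] (B : Matrix ι κ R[X])
    (i : κ) (j : ι) : polyConjTranspose B i j = (B j i).map (starRingEnd R) := rfl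

lemma polyConjTranspose_add [CommSemiring R] [StarRing R] (A B : Matrix ι κ R[X]) :
    polyConjTranspose (A + B) = polyConjTranspose A + polyConjTranspose B := by
  ext; simp

lemma polyConjTranspose_mul [CommSemiring R] [StarRing R] [Fintype κ] (A : Matrix ι κ R[X])
    (B : Matrix κ ν R[X]) :
    polyConjTranspose (A * B) = polyConjTranspose B * polyConjTranspose A := by
  ext; simp [Matrix.mul_apply, Polynomial.map_sum, mul_comm]

lemma derivMat_polyConjTranspose [CommRing R] [StarRing R] (B : Matrix ι κ R[X]) :
    derivMat (polyConjTranspose B) = polyConjTranspose (derivMat B) := by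
  ext; simp [derivative_map]

variable [Fintype ι] [DecidableEq ι]

def evalMat [CommSemiring R] (x : R) : Matrix ι ι R[X] →+* Matrix ι ι R :=
  (evalRingHom x).mapMatrix

@[simp] lemma evalMat_apply [CommSemiring R] (x : R) (A : Matrix ι ι R[X]) (i j : ι) :
    evalMat x A i j = (A i j).eval x := rfl

lemma evalMat_ofReal_polyConjTranspose (x : ℝ) (B : Matrix ι ι ℂ[X]) :
    evalMat (x : ℂ) (polyConjTranspose B) = (evalMat (x : ℂ) B)ᴴ := by
  ext; simp [eval_map, ← eval₂_hom]

end Matrix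

structure PolyDiffOp (ι R : Type*) [CommRing R] where
  F₂ : Matrix ι ι R[X]
  F₁ : Matrix ι ι R[X]
  F₀ : Matrix ι ι R[X]

namespace PolyDiffOp

variable {ι R : Type*} [Fintype ι] [CommRing R]

def applyRight (D : PolyDiffOp ι R) (A : Matrix ι ι R[X]) : Matrix ι ι R[X] :=
  derivMat (derivMat A) * D.F₂ + derivMat A * D.F₁ + A * D.F₀

def applyLeft (D : PolyDiffOp ι R) (B : Matrix ι ι R[X]) : Matrix ι ι R[X] :=
  D.F₂ * derivMat (derivMat B) + D.F₁ * derivMat B + D.F₀ * B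

def conjTranspose [StarRing R] (D : PolyDiffOp ι R) : PolyDiffOp ι R :=
  ⟨polyConjTranspose D.F₂, polyConjTranspose D.F₁, polyConjTranspose D.F₀⟩

lemma polyConjTranspose_applyRight [StarRing R] (D : PolyDiffOp ι R) (B : Matrix ι ι R[X]) :
    polyConjTranspose (D.applyRight B) = D.conjTranspose.applyLeft (polyConjTranspose B) := by
  simp [applyRight, applyLeft, conjTranspose, polyConjTranspose_add, polyConjTranspose_mul,
    derivMat_polyConjTranspose]

def concomitant (U V A B : Matrix ι ι R[X]) : Matrix ι ι R[X] :=
  derivMat A * U * B + A * V * B - A * U * derivMat B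

/-- The coefficients of `A'' B`, `A' B`, `A B`, `A B'` and `A B''` in `smul_sub_smul_eq`;
`D` acts on the left factor and `E` on the right one. -/
structure SymmetryEquations (ρ σ : R[X]) (c₁ c₂ : R) (Φ : Matrix ι ι R[X])
    (D E : PolyDiffOp ι R) (U V : Matrix ι ι R[X]) : Prop where
  eq₂ : c₁ • (D.F₂ * Φ) = ρ • U
  eq₂' : c₂ • (Φ * E.F₂) = ρ • U
  eq₁ : c₁ • (D.F₁ * Φ) = σ • U + ρ • (derivMat U + V)
  eq₁' : c₂ • (Φ * E.F₁) = σ • U + ρ • (derivMat U - V)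
  eq₀ : c₁ • (D.F₀ * Φ) - c₂ • (Φ * E.F₀) = σ • V + ρ • derivMat V

theorem SymmetryEquations.smul_sub_smul_eq {ρ σ : R[X]} {c₁ c₂ : R} {Φ : Matrix ι ι R[X]}
    {D E : PolyDiffOp ι R} {U V : Matrix ι ι R[X]}
    (h : SymmetryEquations ρ σ c₁ c₂ Φ D E U V) (A B : Matrix ι ι R[X]) :
    c₁ • (D.applyRight A * Φ * B) - c₂ • (A * Φ * E.applyLeft B)
      = σ • concomitant U V A B + ρ • derivMat (concomitant U V A B) := by
  have hcoeff : c₁ • (D.applyRight A * Φ * B) - c₂ • (A * Φ * E.applyLeft B)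
      = derivMat (derivMat A) * (c₁ • (D.F₂ * Φ)) * B + derivMat A * (c₁ • (D.F₁ * Φ)) * B
        + A * (c₁ • (D.F₀ * Φ) - c₂ • (Φ * E.F₀)) * B - A * (c₂ • (Φ * E.F₁)) * derivMat B
        - A * (c₂ • (Φ * E.F₂)) * derivMat (derivMat B) := by
    simp only [applyRight, applyLeft, mul_add, add_mul, mul_sub, sub_mul, Matrix.mul_smul,
      Matrix.smul_mul, smul_add, Matrix.mul_assoc]
    abel
  rw [hcoeff, h.eq₂, h.eq₁, h.eq₀, h.eq₁', h.eq₂', concomitant]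
  simp only [derivMat_add, derivMat_sub, derivMat_mul, mul_add, add_mul, mul_sub, sub_mul,
    Matrix.mul_smul, Matrix.smul_mul, smul_add, smul_sub, Matrix.mul_assoc]
  abel

end PolyDiffOp

open PolyDiffOp

lemma intervalIntegrable_one_sub_sq_rpow {a : ℝ} (ha : -1 < a) :
    IntervalIntegrable (fun x : ℝ => (1 - x ^ 2) ^ a) volume (-1) 1 := by
  have h01 : IntervalIntegrable (fun x : ℝ => (1 - x ^ 2) ^ a) volume 0 1 := by
    have hsing : IntervalIntegrable (fun x : ℝ => (1 - x) ^ a) volume 0 1 := by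
      simpa using
        (intervalIntegral.intervalIntegrable_rpow' (a := 0) (b := 1) ha).comp_sub_left 1 |>.symm
    have hcont : ContinuousOn (fun x : ℝ => (1 + x) ^ a) (uIcc 0 1) :=
      (continuous_const.add continuous_id).continuousOn.rpow_const fun x hx => by
        rw [uIcc_of_le zero_le_one] at hx
        exact Or.inl (by simp; linarith [hx.1])
    refine (hsing.mul_continuousOn hcont).congr fun x hx => ?_
    rw [uIoc_of_le zero_le_one] at hx
    rw [← Real.mul_rpow (by linarith [hx.2]) (by linarith [hx.1])]
    ring_nf
  have h10 : IntervalIntegrable (fun x : ℝ => (1 - x ^ 2) ^ a) volume (-1) 0 := by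
    simpa using (IntervalIntegrable.iff_comp_neg (by simp)).mp h01.symm
  exact h10.trans h01

lemma intervalIntegrable_one_sub_sq_rpow_mul_eval {a : ℝ} (ha : -1 < a) (q : ℂ[X]) :
    IntervalIntegrable (fun x : ℝ => (((1 - x ^ 2) ^ a : ℝ) : ℂ) * q.eval (x : ℂ))
      volume (-1) 1 := by
  have hw : IntervalIntegrable (fun x : ℝ => (((1 - x ^ 2) ^ a : ℝ) : ℂ)) volume (-1) 1 := by
    have := intervalIntegrable_one_sub_sq_rpow ha
    rw [intervalIntegrable_iff] at this ⊢
    exact this.ofReal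
  exact hw.mul_continuousOn (q.continuous.comp Complex.continuous_ofReal).continuousOn

theorem integral_one_sub_sq_rpow_mul_eval_eq_zero {n : ℝ} (hn : 0 < n) (t : ℂ[X]) :
    ∫ x in (-1 : ℝ)..1, (((1 - x ^ 2) ^ (n / 2 - 1) : ℝ) : ℂ)
      * (-(C (n : ℂ) * X) * t + (1 - X ^ 2) * derivative t).eval (x : ℂ) = 0 := by
  set g : ℝ → ℂ := fun x => (((1 - x ^ 2) ^ (n / 2) : ℝ) : ℂ) * t.eval (x : ℂ)
  have hg : ContinuousOn g (Icc (-1) 1) := by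
    refine (Complex.continuous_ofReal.comp ?_).continuousOn.mul
      (t.continuous.comp Complex.continuous_ofReal).continuousOn
    exact (continuous_const.sub (continuous_pow 2)).rpow_const fun _ => Or.inr (by positivity)
  have hderiv : ∀ x ∈ Ioo (-1 : ℝ) 1, HasDerivAt g ((((1 - x ^ 2) ^ (n / 2 - 1) : ℝ) : ℂ)
      * (-(C (n : ℂ) * X) * t + (1 - X ^ 2) * derivative t).eval (x : ℂ)) x := by
    intro x hx
    have hpos : 0 < 1 - x ^ 2 := by nlinarith [hx.1, hx.2]
    have hw : HasDerivAt (fun y : ℝ => (1 - y ^ 2) ^ (n / 2))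
        (-(2 * x) * (n / 2) * (1 - x ^ 2) ^ (n / 2 - 1)) x := by
      simpa using ((hasDerivAt_pow 2 x).const_sub 1).rpow_const (p := n / 2) (Or.inl hpos.ne')
    refine (hw.ofReal_comp.mul (t.hasDerivAt (x : ℂ)).comp_ofReal).congr_deriv ?_
    have hsplit : (1 - x ^ 2) ^ (n / 2) = (1 - x ^ 2) ^ (n / 2 - 1) * (1 - x ^ 2) := by
      rw [← Real.rpow_add_one hpos.ne']; norm_num
    simp only [eval_add, eval_mul, eval_neg, eval_C, eval_X, eval_sub, eval_pow, eval_one, hsplit]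
    push_cast
    ring
  have hn2 : n / 2 ≠ 0 := by positivity
  rw [intervalIntegral.integral_eq_sub_of_hasDerivAt_of_le (by norm_num) hg hderiv
    (intervalIntegrable_one_sub_sq_rpow_mul_eval (by linarith) _)]
  simp [g, Real.zero_rpow hn2]

lemma mderiv_evalMat (A : Matrix (Fin 2) (Fin 2) ℂ[X]) :
    mderiv (fun t : ℝ => evalMat (t : ℂ) A) = fun x : ℝ => evalMat (x : ℂ) (derivMat A) := by
  funext x
  ext i j
  exact ((A i j).hasDerivAt (x : ℂ)).comp_ofReal.deriv

lemma IsPolyMat.exists_evalMat_eq {P : ℝ → Matrix (Fin 2) (Fin 2) ℂ} (hP : IsPolyMat P) :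
    ∃ A : Matrix (Fin 2) (Fin 2) ℂ[X], P = fun x : ℝ => evalMat (x : ℂ) A := by
  choose A hA using hP
  exact ⟨Matrix.of A, funext fun x => Matrix.ext fun i j => hA i j x⟩

def weightPoly (p n : ℂ) : Matrix (Fin 2) (Fin 2) ℂ[X] :=
  !![C p * X ^ 2 + C (n - p), -(C n * X); -(C n * X), C (n - p) * X ^ 2 + C p]

lemma Wmat_eq (p n x : ℝ) :
    Wmat p n x = (((1 - x ^ 2) ^ (n / 2 - 1) : ℝ) : ℂ) • evalMat (x : ℂ) (weightPoly p n) := by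
  rw [Wmat]
  congr 1
  ext i j
  fin_cases i <;> fin_cases j <;> simp [weightPoly]
  ring

lemma mint_evalMat (p n : ℝ) (A B : Matrix (Fin 2) (Fin 2) ℂ[X]) :
    mint p n (fun x : ℝ => evalMat (x : ℂ) A) (fun x : ℝ => evalMat (x : ℂ) B)
      = Matrix.of fun i j => ∫ x in (-1 : ℝ)..1, (((1 - x ^ 2) ^ (n / 2 - 1) : ℝ) : ℂ)
          * ((A * weightPoly p n * polyConjTranspose B) i j).eval (x : ℂ) := by
  ext i j
  refine intervalIntegral.integral_congr fun x _ => ?_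
  simp only [Wmat_eq, ← evalMat_ofReal_polyConjTranspose, Matrix.mul_smul, Matrix.smul_mul,
    ← map_mul, Matrix.smul_apply, evalMat_apply, smul_eq_mul]

theorem PolyDiffOp.SymmetryEquations.smul_mint_eq {p n : ℝ} (hn : 0 < n) {c₁ c₂ : ℂ}
    {D E : PolyDiffOp (Fin 2) ℂ} {U V : Matrix (Fin 2) (Fin 2) ℂ[X]}
    (h : SymmetryEquations (1 - X ^ 2) (-(C (n : ℂ) * X)) c₁ c₂ (weightPoly p n) D
      E.conjTranspose U V) (A B : Matrix (Fin 2) (Fin 2) ℂ[X]) :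
    c₁ • mint p n (fun x : ℝ => evalMat (x : ℂ) (D.applyRight A)) (fun x : ℝ => evalMat (x : ℂ) B)
      = c₂ • mint p n (fun x : ℝ => evalMat (x : ℂ) A)
          (fun x : ℝ => evalMat (x : ℂ) (E.applyRight B)) := by
  rw [mint_evalMat, mint_evalMat, polyConjTranspose_applyRight]
  ext i j
  have hentry := congrArg (· i j) (h.smul_sub_smul_eq A (polyConjTranspose B))
  simp only [Matrix.sub_apply, Matrix.add_apply, Matrix.smul_apply, derivMat_apply,
    smul_eq_mul] at hentry
  rw [Matrix.smul_apply, Matrix.smul_apply, Matrix.of_apply, Matrix.of_apply, smul_eq_mul,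
    smul_eq_mul, ← sub_eq_zero, ← intervalIntegral.integral_const_mul,
    ← intervalIntegral.integral_const_mul, ← intervalIntegral.integral_sub,
    ← integral_one_sub_sq_rpow_mul_eval_eq_zero hn (concomitant U V A (polyConjTranspose B) i j)]
  · refine intervalIntegral.integral_congr fun x _ => ?_
    simp only [← hentry, eval_sub, eval_smul, smul_eq_mul]
    ring
  all_goals exact (intervalIntegrable_one_sub_sq_rpow_mul_eval (by linarith) _).const_mul _

def opD₁ (p n : ℂ) : PolyDiffOp (Fin 2) ℂ where
  F₂ := !![X ^ 2, X; -X, -1]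
  F₁ := !![C (n + 2) * X, C (n - p + 2); C (-p), 0]
  F₀ := !![C (p * (n - p + 1)), 0; 0, 0]

def opD₂ (p n : ℂ) : PolyDiffOp (Fin 2) ℂ where
  F₂ := !![-1, -X; X, X ^ 2]
  F₁ := !![0, C (p - n); C (p + 2), C (n + 2) * X]
  F₀ := !![0, 0; 0, C ((p + 1) * (n - p))]

def opD₃ (p : ℂ) : PolyDiffOp (Fin 2) ℂ where
  F₂ := !![-X, -1; X ^ 2, X]
  F₁ := !![C (-p), 0; C (2 * (p + 1)) * X, C (p + 2)]
  F₀ := !![0, 0; C (p * (p + 1)), 0]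

def opD₄ (p n : ℂ) : PolyDiffOp (Fin 2) ℂ where
  F₂ := !![X, X ^ 2; -1, -X]
  F₁ := !![C (n - p + 2), C (2 * (n - p + 1)) * X; 0, C (p - n)]
  F₀ := !![0, C ((n - p) * (n - p + 1)); 0, 0]

lemma actD1_evalMat (p n : ℝ) (A : Matrix (Fin 2) (Fin 2) ℂ[X]) :
    actD1 p n (fun t : ℝ => evalMat (t : ℂ) A)
      = fun x : ℝ => evalMat (x : ℂ) ((opD₁ p n).applyRight A) := by
  funext x
  simp only [actD1, mderiv_evalMat, applyRight, map_add, map_mul]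
  ext i j
  fin_cases i <;> fin_cases j <;> simp [Matrix.mul_apply, opD₁]

lemma actD2_evalMat (p n : ℝ) (A : Matrix (Fin 2) (Fin 2) ℂ[X]) :
    actD2 p n (fun t : ℝ => evalMat (t : ℂ) A)
      = fun x : ℝ => evalMat (x : ℂ) ((opD₂ p n).applyRight A) := by
  funext x
  simp only [actD2, mderiv_evalMat, applyRight, map_add, map_mul]
  ext i j
  fin_cases i <;> fin_cases j <;> simp [Matrix.mul_apply, opD₂]

lemma actD3_evalMat (p n : ℝ) (A : Matrix (Fin 2) (Fin 2) ℂ[X]) :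
    actD3 p n (fun t : ℝ => evalMat (t : ℂ) A)
      = fun x : ℝ => evalMat (x : ℂ) ((opD₃ p).applyRight A) := by
  funext x
  simp only [actD3, mderiv_evalMat, applyRight, map_add, map_mul]
  ext i j
  fin_cases i <;> fin_cases j <;> simp [Matrix.mul_apply, opD₃]

lemma actD4_evalMat (p n : ℝ) (A : Matrix (Fin 2) (Fin 2) ℂ[X]) :
    actD4 p n (fun t : ℝ => evalMat (t : ℂ) A)
      = fun x : ℝ => evalMat (x : ℂ) ((opD₄ p n).applyRight A) := by
  funext x
  simp only [actD4, mderiv_evalMat, applyRight, map_add, map_mul]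
  ext i j
  fin_cases i <;> fin_cases j <;> simp [Matrix.mul_apply, opD₄]

-- `U` is forced by `eq₂` (`ρ U = c₁ F₂ Φ`), and then `V` by `eq₁`.
def concomitantU₁ (p : ℂ) : Matrix (Fin 2) (Fin 2) ℂ[X] :=
  !![-(C p * X ^ 2), C p * X; C p * X, -C p]

def concomitantV₁ (p n : ℂ) : Matrix (Fin 2) (Fin 2) ℂ[X] :=
  !![0, C (p * (n - p + 1)); -C (p * (n - p + 1)), 0]

def concomitantU₂ (p n : ℂ) : Matrix (Fin 2) (Fin 2) ℂ[X] :=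
  !![-C (n - p), C (n - p) * X; C (n - p) * X, -(C (n - p) * X ^ 2)]

def concomitantV₂ (p n : ℂ) : Matrix (Fin 2) (Fin 2) ℂ[X] :=
  !![0, -C ((n - p) * (p + 1)); C ((n - p) * (p + 1)), 0]

def concomitantU₃ (p n : ℂ) : Matrix (Fin 2) (Fin 2) ℂ[X] :=
  !![C (p * (n - p)) * X, -C (p * (n - p)); -(C (p * (n - p)) * X ^ 2), C (p * (n - p)) * X]

def concomitantV₃ (p n : ℂ) : Matrix (Fin 2) (Fin 2) ℂ[X] :=
  !![-C (p * (n - p) * (n - p + 1)), 0;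
     C (p * (n - p) * (n - 2 * p)) * X, C (p * (n - p) * (p + 1))]

lemma symmetryEquations_opD₁ (p n : ℝ) :
    SymmetryEquations (1 - X ^ 2) (-(C (n : ℂ) * X)) 1 1 (weightPoly p n) (opD₁ p n)
      (opD₁ p n).conjTranspose (concomitantU₁ p) (concomitantV₁ p n) := by
  constructor <;> ext i j : 1 <;> fin_cases i <;> fin_cases j <;>
    simp only [weightPoly, opD₁, PolyDiffOp.conjTranspose, concomitantU₁, concomitantV₁,
      Fin.zero_eta, Fin.mk_one, Matrix.smul_apply, Matrix.add_apply, Matrix.sub_apply,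
      Matrix.mul_apply, Fin.sum_univ_two, Matrix.of_apply, Matrix.cons_val',
      Matrix.cons_val_zero, Matrix.cons_val_one, Matrix.cons_val_fin_one, Matrix.empty_val',
      derivMat_apply, polyConjTranspose_apply, smul_eq_C_mul, Polynomial.map_add,
      Polynomial.map_sub, Polynomial.map_mul, Polynomial.map_neg, Polynomial.map_pow,
      Polynomial.map_X, Polynomial.map_C, Polynomial.map_one, Polynomial.map_zero,
      derivative_mul, derivative_C, derivative_X, derivative_X_pow, derivative_one,
      derivative_zero, map_add, map_sub, map_mul, map_neg, map_one, Nat.cast_ofNat,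
      Polynomial.C_ofNat, Polynomial.map_ofNat, Complex.conj_ofReal] <;>
    ring

lemma symmetryEquations_opD₂ (p n : ℝ) :
    SymmetryEquations (1 - X ^ 2) (-(C (n : ℂ) * X)) 1 1 (weightPoly p n) (opD₂ p n)
      (opD₂ p n).conjTranspose (concomitantU₂ p n) (concomitantV₂ p n) := by
  constructor <;> ext i j : 1 <;> fin_cases i <;> fin_cases j <;>
    simp only [weightPoly, opD₂, PolyDiffOp.conjTranspose, concomitantU₂, concomitantV₂,
      Fin.zero_eta, Fin.mk_one, Matrix.smul_apply, Matrix.add_apply, Matrix.sub_apply,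
      Matrix.mul_apply, Fin.sum_univ_two, Matrix.of_apply, Matrix.cons_val',
      Matrix.cons_val_zero, Matrix.cons_val_one, Matrix.cons_val_fin_one, Matrix.empty_val',
      derivMat_apply, polyConjTranspose_apply, smul_eq_C_mul, Polynomial.map_add,
      Polynomial.map_sub, Polynomial.map_mul, Polynomial.map_neg, Polynomial.map_pow,
      Polynomial.map_X, Polynomial.map_C, Polynomial.map_one, Polynomial.map_zero,
      derivative_mul, derivative_C, derivative_X, derivative_X_pow, derivative_one,
      derivative_zero, map_add, map_sub, map_mul, map_neg, map_one, Nat.cast_ofNat,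
      Polynomial.C_ofNat, Polynomial.map_ofNat, Complex.conj_ofReal] <;>
    ring

lemma symmetryEquations_opD₃ (p n : ℝ) :
    SymmetryEquations (1 - X ^ 2) (-(C (n : ℂ) * X)) ((n : ℂ) - p) p (weightPoly p n) (opD₃ p)
      (opD₄ p n).conjTranspose (concomitantU₃ p n) (concomitantV₃ p n) := by
  constructor <;> ext i j : 1 <;> fin_cases i <;> fin_cases j <;>
    simp only [weightPoly, opD₃, opD₄, PolyDiffOp.conjTranspose, concomitantU₃, concomitantV₃,
      Fin.zero_eta, Fin.mk_one, Matrix.smul_apply, Matrix.add_apply, Matrix.sub_apply,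
      Matrix.mul_apply, Fin.sum_univ_two, Matrix.of_apply, Matrix.cons_val',
      Matrix.cons_val_zero, Matrix.cons_val_one, Matrix.cons_val_fin_one, Matrix.empty_val',
      derivMat_apply, polyConjTranspose_apply, smul_eq_C_mul, Polynomial.map_add,
      Polynomial.map_sub, Polynomial.map_mul, Polynomial.map_neg, Polynomial.map_pow,
      Polynomial.map_X, Polynomial.map_C, Polynomial.map_one, Polynomial.map_zero,
      derivative_mul, derivative_C, derivative_X, derivative_X_pow, derivative_one,
      derivative_zero, derivative_ofNat, map_add, map_sub, map_mul, map_neg, map_one,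
      Nat.cast_ofNat, Polynomial.C_ofNat, Polynomial.map_ofNat, Complex.conj_ofReal] <;>
    ring

/-- `D₁` and `D₂` are symmetric with respect to `W`, and the adjoint of
`D₃` is `(p/(n-p))·D₄`, i.e. `(n-p)·⟨P·D₃, Q⟩ = p·⟨P, Q·D₄⟩`. -/
theorem statement18 (p n : ℝ) (hp : 0 < p) (hpn : p < n) :
    ∀ P Q : ℝ → Matrix (Fin 2) (Fin 2) ℂ, IsPolyMat P → IsPolyMat Q →
      mint p n (actD1 p n P) Q = mint p n P (actD1 p n Q) ∧
      mint p n (actD2 p n P) Q = mint p n P (actD2 p n Q) ∧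
      ((n - p : ℝ) : ℂ) • mint p n (actD3 p n P) Q
        = (p : ℂ) • mint p n P (actD4 p n Q) := by
  intro P Q hP hQ
  obtain ⟨A, rfl⟩ := hP.exists_evalMat_eq
  obtain ⟨B, rfl⟩ := hQ.exists_evalMat_eq
  have hn : 0 < n := hp.trans hpn
  refine ⟨?_, ?_, ?_⟩
  · rw [actD1_evalMat, actD1_evalMat]
    simpa only [one_smul] using (symmetryEquations_opD₁ p n).smul_mint_eq hn A B
  · rw [actD2_evalMat, actD2_evalMat]
    simpa only [one_smul] using (symmetryEquations_opD₂ p n).smul_mint_eq hn A B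
  · rw [actD3_evalMat, actD4_evalMat, Complex.ofReal_sub]
    exact (symmetryEquations_opD₃ p n).smul_mint_eq hn A B

end
end

section
/- Assume n ≠ 2p, and for each integer w ≥ 0 define λ_{w,1} = −w(w+n+1)−p and λ_{w,2} = −w(w+n+1)−(n−p). Then for all integers w, w' ≥ 0 and all i, j ∈ {1,2}, λ_{w,i} = λ_{w',j} implies w = w' and i = j. -/
/-! The numbers `w (w + n + 1)` grow by at least `n + 2` from one `w` to the next, while the two
shifts `p` and `n - p` both lie in `(0, n)`; so equal eigenvalues force `w = w'`, and then equal
shifts, which are distinct exactly because `n ≠ 2p`. -/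

namespace Statement19

/-- The shift `c_i` in `λ_{w,i} = -w(w+n+1) - c_i`, with `i = 0, 1` standing for `i = 1, 2`. -/
def shift (p n : ℝ) (i : Fin 2) : ℝ := if i = 0 then p else n - p

theorem shift_mem_Ioo {p n : ℝ} (hp : 0 < p) (hpn : p < n) (i : Fin 2) :
    shift p n i ∈ Set.Ioo 0 n := by
  unfold shift
  split_ifs <;> constructor <;> linarith

theorem shift_injective {p n : ℝ} (hn : n ≠ 2 * p) : Function.Injective (shift p n) := by
  intro i j h
  fin_cases i <;> fin_cases j <;> simp [shift] at h ⊢ <;> exact hn (by linarith)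

theorem add_two_le_sub_of_lt {n : ℝ} (hn : -2 ≤ n) {w w' : ℕ} (hlt : w < w') :
    n + 2 ≤ (w' : ℝ) * (w' + n + 1) - w * (w + n + 1) := by
  have hsucc : (w : ℝ) + 1 ≤ w' := by exact_mod_cast hlt
  have hw : (0 : ℝ) ≤ w := w.cast_nonneg
  nlinarith

theorem eq_of_mul_add_add_eq {n a b : ℝ} (hab : |a - b| < n + 2) {w w' : ℕ}
    (h : (w : ℝ) * (w + n + 1) + a = w' * (w' + n + 1) + b) : w = w' := by
  have hn : -2 ≤ n := by linarith [abs_nonneg (a - b)]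
  obtain ⟨hlo, hhi⟩ := abs_lt.mp hab
  rcases lt_trichotomy w w' with hlt | heq | hgt
  · linarith [add_two_le_sub_of_lt hn hlt]
  · exact heq
  · linarith [add_two_le_sub_of_lt hn hgt]

end Statement19

open Statement19 in
/-- for `n ≠ 2p`, the eigenvalues `λ_{w,1} = -w(w+n+1)-p` and
`λ_{w,2} = -w(w+n+1)-(n-p)` are pairwise distinct: `λ_{w,i} = λ_{w',j}` implies
`w = w'` and `i = j` (indices `i ∈ {1,2}` are encoded as `Fin 2`, with `0 ↦ p`
and `1 ↦ n-p`). -/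
theorem statement19 (p n : ℝ) (hp : 0 < p) (hpn : p < n) (hn : n ≠ 2 * p)
    (w w' : ℕ) (i j : Fin 2)
    (h : -((w : ℝ) * ((w : ℝ) + n + 1)) - (if i = 0 then p else n - p)
        = -((w' : ℝ) * ((w' : ℝ) + n + 1)) - (if j = 0 then p else n - p)) :
    w = w' ∧ i = j := by
  change -((w : ℝ) * (w + n + 1)) - shift p n i = -((w' : ℝ) * (w' + n + 1)) - shift p n j at h
  obtain ⟨hi₀, hin⟩ := shift_mem_Ioo hp hpn i
  obtain ⟨hj₀, hjn⟩ := shift_mem_Ioo hp hpn j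
  have hshift : |shift p n i - shift p n j| < n + 2 := by
    linarith [abs_sub_lt_of_nonneg_of_lt hi₀.le hin hj₀.le hjn]
  obtain rfl : w = w' := eq_of_mul_add_add_eq hshift (by linarith)
  exact ⟨rfl, shift_injective hn (by linarith)⟩
end
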